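/- arXiv:2405.10465 — 7 statements merged into one kernel-verified Lean document; each statement's English description precedes it below -/
import Mathlib

section
/- Let A ∈ ℂ^{m×n} have singular value decomposition A = U Σ V^H, and fix k ≥ 0 with m ≥ k, n ≥ k. Choose a matrix Ω ∈ ℂ^{n×l} and form Y = A·Ω ∈ ℂ^{m×l}. Partition Σ = blkdiag(Σ₁, Σ₂) with Σ₁ ∈ ℝ^{k×k}, Σ₂ ∈ ℝ^{(m−k)×(n−k)}, and V = [V₁, V₂] with V₁ ∈ ℂ^{n×k}, V₂ ∈ ℂ^{n×(n−k)}; set Ω₁ = V₁^H Ω and Ω₂ = V₂^H Ω. If Ω₁ has full row rank, then ‖(I_m − P_Y)·A‖_F² ≤ ‖Σ₂‖_F² + ‖Σ₂ Ω₂ Ω₁†‖_F² ≤ ‖Σ₂‖_F² + ‖Σ₂‖_F²·‖Ω₂‖₂²·‖Ω₁†‖₂², where Ω₁† is the Moore–Penrose pseudo-inverse of Ω₁ and P_Y is the orthogonal projector onto range(Y). -/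
open Matrix MeasureTheory
open scoped Matrix.Norms.L2Operator
open scoped BigOperators

noncomputable section

/-- Frobenius norm of a matrix. -/
def frobNorm {𝕜 : Type*} [RCLike 𝕜] {m n : Type*} [Fintype m] [Fintype n]
    (A : Matrix m n 𝕜) : ℝ :=
  Real.sqrt (∑ i, ∑ j, ‖A i j‖ ^ 2)

/-- Spectral norm (operator 2-norm) of a matrix. -/
def specNorm {𝕜 : Type*} [RCLike 𝕜] {m n : ℕ} (A : Matrix (Fin m) (Fin n) 𝕜) : ℝ :=
  ‖LinearMap.toContinuousLinearMap (Matrix.toEuclideanLin A)‖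

/-- the `j`-th largest singular value, `j : Fin n` (0-indexed). -/
def svalFin {m n : ℕ} (A : Matrix (Fin m) (Fin n) ℂ) (j : Fin n) : ℝ :=
  Real.sqrt ((Matrix.isHermitian_conjTranspose_mul_self A).eigenvalues
    (Tuple.sort (Matrix.isHermitian_conjTranspose_mul_self A).eigenvalues j.rev))

/-- `sval A j` is the `j`-th largest singular value of `A` (1-indexed). -/
def sval {m n : ℕ} (A : Matrix (Fin m) (Fin n) ℂ) (j : ℕ) : ℝ :=
  if h : j - 1 < n then svalFin A ⟨j - 1, h⟩ else 0

/-- Moore-Penrose pseudo-inverse of a full-row-rank matrix. -/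
def pinvFRR {m n : ℕ} (A : Matrix (Fin m) (Fin n) ℂ) : Matrix (Fin n) (Fin m) ℂ :=
  Aᴴ * (A * Aᴴ)⁻¹

/-- embedding of `Fin (m - k)` into `Fin m` shifting by `k`. -/
def finShift (k : ℕ) {m : ℕ} (i : Fin (m - k)) : Fin m :=
  ⟨k + i.1, by have h := i.2; omega⟩

/-- rectangular diagonal matrix with diagonal `d`. -/
def diagRect (m n : ℕ) (d : ℕ → ℝ) : Matrix (Fin m) (Fin n) ℂ :=
  Matrix.of fun i j => if (i : ℕ) = (j : ℕ) then (d (i : ℕ) : ℂ) else 0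

/-- `U, d, V` form a (full) singular value decomposition of `A`. -/
def IsSVD {m n : ℕ} (A : Matrix (Fin m) (Fin n) ℂ)
    (U : Matrix (Fin m) (Fin m) ℂ) (d : ℕ → ℝ) (V : Matrix (Fin n) (Fin n) ℂ) : Prop :=
  Uᴴ * U = 1 ∧ Vᴴ * V = 1 ∧ Antitone d ∧ (∀ i, 0 ≤ d i) ∧ A = U * diagRect m n d * Vᴴ

/-- rectangular diagonal matrix keeping only the first `k` diagonal entries of `d`. -/
def truncDiagRect (m n k : ℕ) (d : ℕ → ℝ) : Matrix (Fin m) (Fin n) ℂ :=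
  Matrix.of fun i j => if (i : ℕ) = (j : ℕ) ∧ (i : ℕ) < k then (d (i : ℕ) : ℂ) else 0

/-- `Ak` is a rank-`k` truncated SVD of `A`. -/
def IsTruncSVD {m n : ℕ} (A : Matrix (Fin m) (Fin n) ℂ) (k : ℕ)
    (Ak : Matrix (Fin m) (Fin n) ℂ) : Prop :=
  ∃ U d V, IsSVD A U d V ∧ Ak = U * truncDiagRect m n k d * Vᴴ

/-- `U, d, V` form an economy-size SVD of the `m × l` matrix `A`. -/
def IsEconSVD {m l : ℕ} (A : Matrix (Fin m) (Fin l) ℂ)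
    (U : Matrix (Fin m) (Fin l) ℂ) (d : ℕ → ℝ) (V : Matrix (Fin l) (Fin l) ℂ) : Prop :=
  Uᴴ * U = 1 ∧ Vᴴ * V = 1 ∧ Antitone d ∧ (∀ i, 0 ≤ d i) ∧ A = U * diagRect l l d * Vᴴ

/-- the unitary discrete Fourier transform matrix. -/
def dftMatrix (n : ℕ) : Matrix (Fin n) (Fin n) ℂ :=
  Matrix.of fun p q =>
    ((Real.sqrt n : ℂ))⁻¹ *
      Complex.exp (-2 * (Real.pi : ℂ) * Complex.I * (p.1 : ℂ) * (q.1 : ℂ) / (n : ℂ))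

/-- SRFT matrix built from angles `θ` (giving the random diagonal `D`) and a random
selection `e` of columns of the identity (the matrix `R`). -/
def srft (n l : ℕ) (θ : Fin n → ℝ) (e : Fin l ↪ Fin n) : Matrix (Fin n) (Fin l) ℂ :=
  (Real.sqrt ((n : ℝ) / (l : ℝ)) : ℂ) •
    (Matrix.diagonal (fun j => Complex.exp (Complex.I * (θ j : ℂ))) * dftMatrix n *
      Matrix.of fun i j => if i = e j then (1:ℂ) else 0)

/-- product of uniform measures on `[0, 2π)`, modelling i.i.d. uniform angles. -/
def unifAngle (n : ℕ) : Measure (Fin n → ℝ) :=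
  Measure.pi fun _ => volume.restrict (Set.Ico 0 (2 * Real.pi))

/-- complex snapshot matrix. -/
def cplx {N ns : ℕ} (Q P : Matrix (Fin N) (Fin ns) ℝ) : Matrix (Fin N) (Fin ns) ℂ :=
  Matrix.of fun i j => (Q i j : ℂ) + Complex.I * (P i j : ℂ)

/-- canonical Poisson matrix `J₂ₙ`. -/
def poisson (N : ℕ) : Matrix (Fin N ⊕ Fin N) (Fin N ⊕ Fin N) ℝ :=
  Matrix.fromBlocks 0 1 (-1) 0


def sqF {p q : Type*} [Fintype p] [Fintype q] (X : Matrix p q ℂ) : ℝ :=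
  ∑ i, ∑ j, ‖X i j‖ ^ 2

lemma sqF_nonneg {p q : Type*} [Fintype p] [Fintype q] (X : Matrix p q ℂ) : 0 ≤ sqF X :=
  Finset.sum_nonneg fun _ _ => Finset.sum_nonneg fun _ _ => sq_nonneg _

lemma frobNorm_sq {p q : Type*} [Fintype p] [Fintype q] (X : Matrix p q ℂ) :
    frobNorm X ^ 2 = sqF X :=
  Real.sq_sqrt (sqF_nonneg X)

lemma specNorm_eq {m n : ℕ} (A : Matrix (Fin m) (Fin n) ℂ) : specNorm A = ‖A‖ := rfl

lemma specNorm_conjTranspose {m n : ℕ} (A : Matrix (Fin m) (Fin n) ℂ) :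
    specNorm Aᴴ = specNorm A := by
  rw [specNorm_eq, specNorm_eq, Matrix.l2_opNorm_conjTranspose]

lemma sqF_eq_trace {p q : Type*} [Fintype p] [Fintype q] (X : Matrix p q ℂ) :
    sqF X = (Matrix.trace (Xᴴ * X)).re := by
  simp only [Matrix.trace, Matrix.diag, Matrix.mul_apply, Matrix.conjTranspose_apply,
    Complex.re_sum]
  rw [sqF, Finset.sum_comm]
  refine Finset.sum_congr rfl fun j _ => Finset.sum_congr rfl fun i _ => ?_
  rw [Complex.star_def, mul_comm, Complex.mul_conj, Complex.ofReal_re, ← Complex.sq_norm]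

lemma sqF_conjTranspose {p q : Type*} [Fintype p] [Fintype q] (X : Matrix p q ℂ) :
    sqF Xᴴ = sqF X := by
  rw [sqF, sqF, Finset.sum_comm]
  simp [Matrix.conjTranspose_apply]

lemma sqF_unitary_left {p q : Type*} [Fintype p] [Fintype q] [DecidableEq p]
    (U : Matrix p p ℂ) (X : Matrix p q ℂ) (h : Uᴴ * U = 1) : sqF (U * X) = sqF X := by
  rw [sqF_eq_trace, sqF_eq_trace]
  congr 2
  rw [Matrix.conjTranspose_mul, Matrix.mul_assoc, ← Matrix.mul_assoc Uᴴ U X, h,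
    Matrix.one_mul]

lemma sqF_unitary_right {p q : Type*} [Fintype p] [Fintype q] [DecidableEq q]
    (X : Matrix p q ℂ) (V : Matrix q q ℂ) (h : V * Vᴴ = 1) : sqF (X * V) = sqF X := by
  rw [sqF_eq_trace, sqF_eq_trace]
  congr 1
  rw [Matrix.conjTranspose_mul, Matrix.trace_mul_comm, Matrix.mul_assoc X V (Vᴴ * Xᴴ),
    ← Matrix.mul_assoc V Vᴴ Xᴴ, h, Matrix.one_mul, Matrix.trace_mul_comm]

lemma sqF_proj_le {p q : Type*} [Fintype p] [Fintype q] [DecidableEq p]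
    (P : Matrix p p ℂ) (M : Matrix p q ℂ) (hP1 : P * P = P) (hP2 : Pᴴ = P) :
    sqF ((1 - P) * M) ≤ sqF M := by
  have h1P : (1 - P) * (1 - P) = 1 - P := by
    simp only [Matrix.mul_sub, Matrix.sub_mul, Matrix.one_mul, Matrix.mul_one, hP1]
    abel
  have h1 : ((1 - P) * M)ᴴ * ((1 - P) * M) = Mᴴ * ((1 - P) * M) := by
    rw [Matrix.conjTranspose_mul, Matrix.conjTranspose_sub, Matrix.conjTranspose_one, hP2,
      Matrix.mul_assoc, ← Matrix.mul_assoc (1 - P) (1 - P) M, h1P]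
  have h2 : (P * M)ᴴ * (P * M) = Mᴴ * (P * M) := by
    rw [Matrix.conjTranspose_mul, hP2, Matrix.mul_assoc, ← Matrix.mul_assoc P P M, hP1]
  have key : sqF M = sqF ((1 - P) * M) + sqF (P * M) := by
    rw [sqF_eq_trace, sqF_eq_trace, sqF_eq_trace, h1, h2, ← Complex.add_re,
      ← Matrix.trace_add, ← Matrix.mul_add]
    congr 3
    rw [Matrix.sub_mul, Matrix.one_mul]
    abel
  have := sqF_nonneg (P * M)
  linarith

lemma sqF_mul_le_spec_left {p q r : ℕ} (C : Matrix (Fin p) (Fin q) ℂ)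
    (D : Matrix (Fin q) (Fin r) ℂ) : sqF (C * D) ≤ specNorm C ^ 2 * sqF D := by
  have step : ∀ j : Fin r, ∑ i, ‖(C * D) i j‖ ^ 2 ≤ specNorm C ^ 2 * ∑ t, ‖D t j‖ ^ 2 := by
    intro j
    have hnorm : ∀ {s : ℕ} (y : Fin s → ℂ),
        ‖(EuclideanSpace.equiv (Fin s) ℂ).symm y‖ ^ 2 = ∑ i, ‖y i‖ ^ 2 := by
      intro s y
      rw [EuclideanSpace.norm_eq, Real.sq_sqrt (Finset.sum_nonneg fun _ _ => sq_nonneg _)]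
      rfl
    have hb2 : ‖(EuclideanSpace.equiv (Fin p) ℂ).symm (C *ᵥ fun t => D t j)‖ ≤
        ‖C‖ * ‖(EuclideanSpace.equiv (Fin q) ℂ).symm (fun t => D t j)‖ :=
      Matrix.l2_opNorm_mulVec C ((EuclideanSpace.equiv (Fin q) ℂ).symm (fun t => D t j))
    have h1 : ∑ i, ‖(C * D) i j‖ ^ 2 =
        ‖(EuclideanSpace.equiv (Fin p) ℂ).symm (C *ᵥ fun t => D t j)‖ ^ 2 := by
      rw [hnorm]
      refine Finset.sum_congr rfl fun i _ => ?_
      simp [Matrix.mul_apply, Matrix.mulVec, dotProduct]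
    calc ∑ i, ‖(C * D) i j‖ ^ 2
        = ‖(EuclideanSpace.equiv (Fin p) ℂ).symm (C *ᵥ fun t => D t j)‖ ^ 2 := h1
      _ ≤ (‖C‖ * ‖(EuclideanSpace.equiv (Fin q) ℂ).symm (fun t => D t j)‖) ^ 2 :=
          pow_le_pow_left₀ (norm_nonneg _) hb2 2
      _ = specNorm C ^ 2 * ∑ t, ‖D t j‖ ^ 2 := by rw [mul_pow, hnorm, specNorm_eq]
  calc sqF (C * D) = ∑ j, ∑ i, ‖(C * D) i j‖ ^ 2 := Finset.sum_comm
    _ ≤ ∑ j, specNorm C ^ 2 * ∑ t, ‖D t j‖ ^ 2 := Finset.sum_le_sum fun j _ => step j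
    _ = specNorm C ^ 2 * sqF D := by
        rw [← Finset.mul_sum]; congr 1; exact Finset.sum_comm

lemma sqF_mul_le_spec_right {p q r : ℕ} (X : Matrix (Fin p) (Fin q) ℂ)
    (B : Matrix (Fin q) (Fin r) ℂ) : sqF (X * B) ≤ sqF X * specNorm B ^ 2 := by
  have h := sqF_mul_le_spec_left Bᴴ Xᴴ
  rw [← Matrix.conjTranspose_mul, sqF_conjTranspose, sqF_conjTranspose,
    specNorm_conjTranspose] at h
  linarith

open scoped ComplexOrder in
lemma mul_pinvFRR {k l : ℕ} (B : Matrix (Fin k) (Fin l) ℂ) (h : B.rank = k) :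
    B * pinvFRR B = 1 := by
  have h1 : (B * Bᴴ).rank = k := by rw [Matrix.rank_self_mul_conjTranspose, h]
  have htop : LinearMap.range (B * Bᴴ).mulVecLin = ⊤ := by
    apply Submodule.eq_top_of_finrank_eq
    rw [Matrix.rank] at h1
    rw [h1, Module.finrank_fintype_fun_eq_card, Fintype.card_fin]
  have hsurj : Function.Surjective (B * Bᴴ).mulVecLin := LinearMap.range_eq_top.mp htop
  have hinj : Function.Injective (B * Bᴴ).mulVecLin :=
    (LinearMap.injective_iff_surjective).mpr hsurj
  have hunit : IsUnit (B * Bᴴ) := by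
    rw [← Matrix.mulVec_injective_iff_isUnit]
    exact hinj
  rw [pinvFRR, ← Matrix.mul_assoc]
  exact Matrix.mul_nonsing_inv _ ((Matrix.isUnit_iff_isUnit_det _).mp hunit)

@[simp] lemma finShift_val {m k : ℕ} (i : Fin (m - k)) :
    ((finShift k i : Fin m) : ℕ) = k + i := rfl

lemma sum_split {k m : ℕ} (hkm : k ≤ m) (f : Fin m → ℝ) :
    ∑ i, f i = ∑ a : Fin k, f (Fin.castLE hkm a) + ∑ b : Fin (m - k), f (finShift k b) := by
  rw [← Equiv.sum_comp (finSumFinEquiv.trans (finCongr (Nat.add_sub_cancel' hkm))) f,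
    Fintype.sum_sum_type]
  have h1 : ∀ a : Fin k,
      (finSumFinEquiv.trans (finCongr (Nat.add_sub_cancel' hkm))) (Sum.inl a) =
        Fin.castLE hkm a := fun a => Fin.ext (by simp)
  have h2 : ∀ b : Fin (m - k),
      (finSumFinEquiv.trans (finCongr (Nat.add_sub_cancel' hkm))) (Sum.inr b) =
        finShift k b := fun b => Fin.ext (by simp [finShift])
  simp only [h1, h2]

lemma diagRect_mul_apply {m n r : ℕ} (d : ℕ → ℝ) (X : Matrix (Fin n) (Fin r) ℂ)
    (i : Fin m) (t : Fin r) :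
    (diagRect m n d * X) i t = if h : (i:ℕ) < n then (d (i:ℕ) : ℂ) * X ⟨(i:ℕ), h⟩ t else 0 := by
  rw [Matrix.mul_apply]
  by_cases h : (i:ℕ) < n
  · rw [dif_pos h, Finset.sum_eq_single (⟨(i:ℕ), h⟩ : Fin n)]
    · simp [diagRect]
    · intro b _ hb
      simp only [diagRect, Matrix.of_apply]
      rw [if_neg, zero_mul]
      exact fun hib => hb (Fin.ext hib.symm)
    · simp
  · rw [dif_neg h]
    apply Finset.sum_eq_zero
    intro b _
    simp only [diagRect, Matrix.of_apply]
    rw [if_neg, zero_mul]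
    exact fun hib => h (hib ▸ b.2)


theorem stmt3 {m n k l : ℕ} (hkm : k ≤ m) (hkn : k ≤ n)
    (A : Matrix (Fin m) (Fin n) ℂ)
    (U : Matrix (Fin m) (Fin m) ℂ) (d : ℕ → ℝ) (V : Matrix (Fin n) (Fin n) ℂ)
    (hSVD : IsSVD A U d V)
    (Ω : Matrix (Fin n) (Fin l) ℂ)
    (Y : Matrix (Fin m) (Fin l) ℂ) (hY : Y = A * Ω)
    (Sig₂ : Matrix (Fin (m - k)) (Fin (n - k)) ℂ)
    (hSig₂ : Sig₂ = (diagRect m n d).submatrix (finShift k) (finShift k))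
    (V₁ : Matrix (Fin n) (Fin k) ℂ) (hV₁ : V₁ = V.submatrix id (Fin.castLE hkn))
    (V₂ : Matrix (Fin n) (Fin (n - k)) ℂ) (hV₂ : V₂ = V.submatrix id (finShift k))
    (Ω₁ : Matrix (Fin k) (Fin l) ℂ) (hΩ₁ : Ω₁ = V₁ᴴ * Ω)
    (Ω₂ : Matrix (Fin (n - k)) (Fin l) ℂ) (hΩ₂ : Ω₂ = V₂ᴴ * Ω)
    (hΩ₁rank : Ω₁.rank = k)
    (P : Matrix (Fin m) (Fin m) ℂ)
    (hP1 : P * P = P) (hP2 : Pᴴ = P)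
    (hP3 : LinearMap.range (Matrix.mulVecLin P) = LinearMap.range (Matrix.mulVecLin Y)) :
    frobNorm ((1 - P) * A) ^ 2 ≤
        frobNorm Sig₂ ^ 2 + frobNorm (Sig₂ * Ω₂ * pinvFRR Ω₁) ^ 2 ∧
      frobNorm Sig₂ ^ 2 + frobNorm (Sig₂ * Ω₂ * pinvFRR Ω₁) ^ 2 ≤
        frobNorm Sig₂ ^ 2 +
          frobNorm Sig₂ ^ 2 * specNorm Ω₂ ^ 2 * specNorm (pinvFRR Ω₁) ^ 2 := by
  obtain ⟨hUU, hVV, -, -, hA⟩ := hSVD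
  have hVVc : V * Vᴴ = 1 := mul_eq_one_comm.mp hVV
  set S : Matrix (Fin m) (Fin n) ℂ := diagRect m n d with hS
  set W : Matrix (Fin l) (Fin k) ℂ := pinvFRR Ω₁ with hW
  set F : Matrix (Fin (m - k)) (Fin k) ℂ := Sig₂ * Ω₂ * W with hF
  have hΩ₁W : Ω₁ * W = 1 := mul_pinvFRR Ω₁ hΩ₁rank
  -- P fixes the range of Y
  have hPY : P * Y = Y := by
    have hcol : ∀ j : Fin l, P *ᵥ (fun t => Y t j) = (fun t => Y t j) := by
      intro j
      have hmem : (fun t => Y t j) ∈ LinearMap.range (Matrix.mulVecLin Y) := by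
        refine ⟨Pi.single j 1, ?_⟩
        ext t
        simp [Matrix.mulVecLin_apply, Matrix.mulVec, dotProduct, Pi.single_apply]
      rw [← hP3] at hmem
      obtain ⟨x, hx⟩ := hmem
      have hx' : P *ᵥ x = fun t => Y t j := hx
      rw [← hx', Matrix.mulVec_mulVec, hP1]
    ext i j
    have := congrFun (hcol j) i
    simpa [Matrix.mul_apply, Matrix.mulVec, dotProduct] using this
  set M : Matrix (Fin m) (Fin n) ℂ := A - Y * (W * V₁ᴴ) with hM
  have h1PA : (1 - P) * A = (1 - P) * M := by
    have hPZ : (1 - P) * (Y * (W * V₁ᴴ)) = 0 := by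
      rw [← Matrix.mul_assoc, Matrix.sub_mul, Matrix.one_mul, hPY, sub_self,
        Matrix.zero_mul]
    rw [hM, Matrix.mul_sub, hPZ, sub_zero]
  set N : Matrix (Fin m) (Fin n) ℂ := S * Vᴴ - (S * ((Vᴴ * Ω) * W)) * V₁ᴴ with hN
  have hMN : M = U * N := by
    rw [hM, hN, hY, hA]
    simp only [Matrix.mul_sub, Matrix.mul_assoc]
  set K : Matrix (Fin m) (Fin n) ℂ := N * V with hK
  -- entrywise computations
  have hE : ∀ (a : Fin k) (j : Fin n),
      (V₁ᴴ * V) a j = if (a : ℕ) = (j : ℕ) then 1 else 0 := by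
    intro a j
    have h : (V₁ᴴ * V) a j = (Vᴴ * V) (Fin.castLE hkn a) j := by
      simp [hV₁, Matrix.mul_apply, Matrix.conjTranspose_apply]
    rw [h, hVV, Matrix.one_apply]
    simp [Fin.ext_iff]
  have hrow1 : ∀ (a : Fin k) (t : Fin l), (Vᴴ * Ω) (Fin.castLE hkn a) t = Ω₁ a t := by
    intro a t
    simp [hΩ₁, hV₁, Matrix.mul_apply, Matrix.conjTranspose_apply]
  have hrow2 : ∀ (b : Fin (n - k)) (t : Fin l), (Vᴴ * Ω) (finShift k b) t = Ω₂ b t := by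
    intro b t
    simp [hΩ₂, hV₂, Matrix.mul_apply, Matrix.conjTranspose_apply]
  have hVW1 : ∀ (a : Fin k) (t : Fin k),
      ((Vᴴ * Ω) * W) (Fin.castLE hkn a) t = (1 : Matrix (Fin k) (Fin k) ℂ) a t := by
    intro a t
    rw [← hΩ₁W, Matrix.mul_apply, Matrix.mul_apply]
    exact Finset.sum_congr rfl fun s _ => by rw [hrow1]
  have hVW2 : ∀ (b : Fin (n - k)) (t : Fin k),
      ((Vᴴ * Ω) * W) (finShift k b) t = (Ω₂ * W) b t := by
    intro b t
    rw [Matrix.mul_apply, Matrix.mul_apply]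
    exact Finset.sum_congr rfl fun s _ => by rw [hrow2]
  set G : Matrix (Fin m) (Fin k) ℂ := S * ((Vᴴ * Ω) * W) with hGdef
  have hGlow : ∀ (i : Fin m) (hik : k ≤ (i : ℕ)) (t : Fin k),
      G i t = F ⟨(i : ℕ) - k, by have := i.2; omega⟩ t := by
    intro i hik t
    have hFe : F ⟨(i : ℕ) - k, by have := i.2; omega⟩ t =
        ∑ s : Fin (n - k), Sig₂ ⟨(i : ℕ) - k, by have := i.2; omega⟩ s * (Ω₂ * W) s t := by
      rw [hF, Matrix.mul_assoc, Matrix.mul_apply]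
    rw [hGdef, diagRect_mul_apply]
    by_cases hin : (i : ℕ) < n
    · rw [dif_pos hin]
      have hidx : (⟨(i : ℕ), hin⟩ : Fin n) = finShift k ⟨(i : ℕ) - k, by omega⟩ :=
        Fin.ext (show (i : ℕ) = k + ((i : ℕ) - k) by omega)
      rw [hidx, hVW2, hFe, Finset.sum_eq_single (⟨(i : ℕ) - k, by omega⟩ : Fin (n - k))]
      · rw [hSig₂]
        simp only [Matrix.submatrix_apply, hS, diagRect, Matrix.of_apply, finShift]
        simp only [if_true]
        congr 2
        congr 1
        omega
      · intro b _ hb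
        rw [hSig₂]
        simp only [Matrix.submatrix_apply, hS, diagRect, Matrix.of_apply, finShift_val]
        split_ifs with hc
        · exact absurd (Fin.ext (show (b : ℕ) = (i : ℕ) - k by omega)) hb
        · exact mul_eq_zero_of_left (if_neg hc) _
      · simp
    · rw [dif_neg hin, hFe]
      symm
      apply Finset.sum_eq_zero
      intro b _
      rw [hSig₂]
      simp only [Matrix.submatrix_apply, hS, diagRect, Matrix.of_apply, finShift_val]
      have := b.2
      split_ifs with hc
      · exfalso; omega
      · exact mul_eq_zero_of_left (if_neg hc) _
  have hGhigh : ∀ (a : Fin k) (t : Fin k),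
      G (Fin.castLE hkm a) t = if (a : ℕ) = (t : ℕ) then (d (a : ℕ) : ℂ) else 0 := by
    intro a t
    rw [hGdef, diagRect_mul_apply, dif_pos (show ((Fin.castLE hkm a : Fin m) : ℕ) < n from
      lt_of_lt_of_le a.2 hkn)]
    have hidx : (⟨((Fin.castLE hkm a : Fin m) : ℕ), lt_of_lt_of_le a.2 hkn⟩ : Fin n) =
        Fin.castLE hkn a := Fin.ext (by simp)
    rw [hidx, hVW1, Matrix.one_apply]
    simp only [Fin.coe_castLE]
    by_cases hat : a = t
    · subst hat; simp
    · rw [if_neg hat, if_neg (fun hc : (a : ℕ) = (t : ℕ) => hat (Fin.ext hc)), mul_zero]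
  have hKeq : K = S - G * (V₁ᴴ * V) := by
    rw [hK, hN, Matrix.sub_mul, Matrix.mul_assoc S Vᴴ V, hVV, Matrix.mul_one,
      Matrix.mul_assoc]
  have hGE : ∀ (i : Fin m) (j : Fin n),
      (G * (V₁ᴴ * V)) i j = if h : (j : ℕ) < k then G i ⟨(j : ℕ), h⟩ else 0 := by
    intro i j
    rw [Matrix.mul_apply]
    by_cases h : (j : ℕ) < k
    · rw [dif_pos h, Finset.sum_eq_single (⟨(j : ℕ), h⟩ : Fin k)]
      · rw [hE]; simp
      · intro b _ hb
        rw [hE, if_neg, mul_zero]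
        exact fun hc => hb (Fin.ext (by simpa using hc))
      · simp
    · rw [dif_neg h]
      apply Finset.sum_eq_zero
      intro b _
      rw [hE, if_neg, mul_zero]
      have := b.2
      omega
  have hK1 : ∀ (a : Fin k) (j : Fin n), K (Fin.castLE hkm a) j = 0 := by
    intro a j
    rw [hKeq, Matrix.sub_apply, hGE]
    by_cases hj : (j : ℕ) < k
    · rw [dif_pos hj, hGhigh]
      simp only [hS, diagRect, Matrix.of_apply, Fin.coe_castLE]
      have hcoe : ((⟨(j : ℕ), hj⟩ : Fin k) : ℕ) = (j : ℕ) := rfl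
      rw [hcoe]
      by_cases haj : (a : ℕ) = (j : ℕ)
      · rw [if_pos haj, sub_self]
      · rw [if_neg haj, sub_self]
    · rw [dif_neg hj, sub_zero]
      simp only [hS, diagRect, Matrix.of_apply, Fin.coe_castLE]
      have ha := a.2
      split_ifs with hc
      · exfalso; omega
      · rfl
  have hK2 : ∀ (b : Fin (m - k)) (a : Fin k),
      K (finShift k b) (Fin.castLE hkn a) = -(F b a) := by
    intro b a
    rw [hKeq, Matrix.sub_apply, hGE, dif_pos (show ((Fin.castLE hkn a : Fin n) : ℕ) < k by
      simpa using a.2)]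
    have hS0 : S (finShift k b) (Fin.castLE hkn a) = 0 := by
      simp only [hS, diagRect, Matrix.of_apply, finShift_val, Fin.coe_castLE]
      have ha := a.2
      split_ifs with hc
      · exfalso; omega
      · exact if_neg hc
    have hik : k ≤ ((finShift k b : Fin m) : ℕ) := by simp [finShift]
    rw [hS0, hGlow _ hik]
    have hb : (⟨((finShift k b : Fin m) : ℕ) - k, by have := (finShift k b : Fin m).2; omega⟩ :
        Fin (m - k)) = b := Fin.ext (by simp [finShift])
    have ha : (⟨((Fin.castLE hkn a : Fin n) : ℕ), by simpa using a.2⟩ : Fin k) = a :=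
      Fin.ext (by simp)
    rw [hb, ha, zero_sub]
  have hK3 : ∀ (b : Fin (m - k)) (c : Fin (n - k)),
      K (finShift k b) (finShift k c) = Sig₂ b c := by
    intro b c
    rw [hKeq, Matrix.sub_apply, hGE, dif_neg (show ¬ ((finShift k c : Fin n) : ℕ) < k by
      simp [finShift]), sub_zero, hSig₂, Matrix.submatrix_apply]
  have hsqK : sqF K = sqF Sig₂ + sqF F := by
    rw [sqF, sum_split hkm]
    have hz : ∑ a : Fin k, ∑ j, ‖K (Fin.castLE hkm a) j‖ ^ 2 = 0 := by
      apply Finset.sum_eq_zero; intro a _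
      apply Finset.sum_eq_zero; intro j _
      rw [hK1]; simp
    rw [hz, zero_add]
    have hinner : ∀ b : Fin (m - k), ∑ j, ‖K (finShift k b) j‖ ^ 2 =
        ∑ a : Fin k, ‖F b a‖ ^ 2 + ∑ c : Fin (n - k), ‖Sig₂ b c‖ ^ 2 := by
      intro b
      rw [sum_split hkn]
      congr 1
      · exact Finset.sum_congr rfl fun a _ => by rw [hK2, norm_neg]
      · exact Finset.sum_congr rfl fun c _ => by rw [hK3]
    have hrw : ∑ b : Fin (m - k), ∑ j, ‖K (finShift k b) j‖ ^ 2 =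
        ∑ b : Fin (m - k), (∑ a : Fin k, ‖F b a‖ ^ 2 + ∑ c : Fin (n - k), ‖Sig₂ b c‖ ^ 2) :=
      Finset.sum_congr rfl fun b _ => hinner b
    rw [hrw, Finset.sum_add_distrib, add_comm]
    rfl
  have hchain : sqF ((1 - P) * A) ≤ sqF Sig₂ + sqF F := by
    calc sqF ((1 - P) * A) = sqF ((1 - P) * M) := by rw [h1PA]
      _ ≤ sqF M := sqF_proj_le P M hP1 hP2
      _ = sqF (U * N) := by rw [hMN]
      _ = sqF N := sqF_unitary_left U N hUU
      _ = sqF (N * V) := (sqF_unitary_right N V hVVc).symm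
      _ = sqF Sig₂ + sqF F := hsqK
  constructor
  · rw [frobNorm_sq, frobNorm_sq, frobNorm_sq]
    exact hchain
  · rw [frobNorm_sq, frobNorm_sq]
    have h1 : sqF F ≤ sqF (Sig₂ * Ω₂) * specNorm W ^ 2 := by
      rw [hF]; exact sqF_mul_le_spec_right _ _
    have h2 : sqF (Sig₂ * Ω₂) ≤ sqF Sig₂ * specNorm Ω₂ ^ 2 := sqF_mul_le_spec_right _ _
    have h3 : (0 : ℝ) ≤ specNorm W ^ 2 := sq_nonneg _
    have h4 := mul_le_mul_of_nonneg_right h2 h3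
    have h5 : sqF F ≤ sqF Sig₂ * specNorm Ω₂ ^ 2 * specNorm W ^ 2 := le_trans h1 h4
    linarith

end
end

section
/- Let X_s = [Q; P] ∈ ℝ^{2N×n_s} with Q, P ∈ ℝ^{N×n_s}, and let V_E ∈ ℝ^{2N×2k} be an ortho-symplectic matrix with block structure V_E = [[V_Q, −V_P]; [V_P, V_Q]] where V_Qᵀ V_Q + V_Pᵀ V_P = I_k and V_Pᵀ V_Q = V_Qᵀ V_P. Then ‖X_s − V_E·V_Eᵀ·X_s‖_F² = ‖X_c − U_c·U_c^H·X_c‖_F², where U_c = V_Q + i·V_P ∈ ℂ^{N×k} and X_c = Q + i·P ∈ ℂ^{N×n_s}. -/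
open Matrix MeasureTheory
open scoped BigOperators

noncomputable section

lemma cplx_sub {N ns : ℕ} (A B C D : Matrix (Fin N) (Fin ns) ℝ) :
    cplx A B - cplx C D = cplx (A - C) (B - D) := by
  ext i j
  simp only [cplx, Matrix.sub_apply, Matrix.of_apply]
  push_cast
  ring

lemma fromRows_sub {N M ns : ℕ} (A C : Matrix (Fin N) (Fin ns) ℝ)
    (B D : Matrix (Fin M) (Fin ns) ℝ) :
    Matrix.fromRows A B - Matrix.fromRows C D = Matrix.fromRows (A - C) (B - D) := by
  ext i j
  cases i <;> simp [Matrix.fromRows_apply_inl, Matrix.fromRows_apply_inr]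

lemma cplx_mul_conjTranspose {N k : ℕ} (VQ VP : Matrix (Fin N) (Fin k) ℝ) :
    cplx VQ VP * (cplx VQ VP)ᴴ
      = ((VQ * VQᵀ + VP * VPᵀ).map Complex.ofReal)
        + Complex.I • ((VP * VQᵀ - VQ * VPᵀ).map Complex.ofReal) := by
  ext i l
  simp only [Matrix.mul_apply, Matrix.conjTranspose_apply, cplx, Matrix.of_apply,
    Matrix.add_apply, Matrix.sub_apply, Matrix.smul_apply, Matrix.map_apply,
    Matrix.transpose_apply, smul_eq_mul]
  push_cast
  rw [← Finset.sum_sub_distrib, Finset.mul_sum, ← Finset.sum_add_distrib,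
    ← Finset.sum_add_distrib]
  refine Finset.sum_congr rfl fun m _ => ?_
  simp only [star_add, star_mul', Complex.star_def, Complex.conj_ofReal, Complex.conj_I]
  ring_nf
  rw [Complex.I_sq]
  ring

lemma aux_mul {N ns : ℕ} (S T : Matrix (Fin N) (Fin N) ℝ) (Q' P' : Matrix (Fin N) (Fin ns) ℝ) :
    (S.map Complex.ofReal + Complex.I • T.map Complex.ofReal) * cplx Q' P'
      = cplx (S * Q' - T * P') (T * Q' + S * P') := by
  ext i j
  simp only [Matrix.mul_apply, cplx, Matrix.of_apply, Matrix.add_apply, Matrix.sub_apply,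
    Matrix.smul_apply, Matrix.map_apply, smul_eq_mul]
  push_cast
  rw [← Finset.sum_sub_distrib, ← Finset.sum_add_distrib, Finset.mul_sum,
    ← Finset.sum_add_distrib]
  refine Finset.sum_congr rfl fun m _ => ?_
  ring_nf
  rw [Complex.I_sq]
  ring

lemma frob_fromRows_cplx {N ns : ℕ} (A B : Matrix (Fin N) (Fin ns) ℝ) :
    frobNorm (Matrix.fromRows A B) ^ 2 = frobNorm (cplx A B) ^ 2 := by
  unfold frobNorm
  rw [Real.sq_sqrt (by positivity), Real.sq_sqrt (by positivity)]
  have hnorm : ∀ i j, ‖cplx A B i j‖ ^ 2 = ‖A i j‖ ^ 2 + ‖B i j‖ ^ 2 := by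
    intro i j
    simp only [cplx, Matrix.of_apply, Real.norm_eq_abs, sq_abs,
      Complex.sq_norm, Complex.normSq_apply]
    simp
    ring
  simp_rw [hnorm, Finset.sum_add_distrib]
  rw [Fintype.sum_sum_type]
  simp [Matrix.fromRows_apply_inl, Matrix.fromRows_apply_inr]

theorem stmt5 {N ns k : ℕ} (Qm Pm : Matrix (Fin N) (Fin ns) ℝ)
    (VQ VP : Matrix (Fin N) (Fin k) ℝ)
    (h1 : VQᵀ * VQ + VPᵀ * VP = 1) (h2 : VPᵀ * VQ = VQᵀ * VP)
    (Xs : Matrix (Fin N ⊕ Fin N) (Fin ns) ℝ) (hXs : Xs = Matrix.fromRows Qm Pm)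
    (VE : Matrix (Fin N ⊕ Fin N) (Fin k ⊕ Fin k) ℝ)
    (hVE : VE = Matrix.fromBlocks VQ (-VP) VP VQ)
    (Xc : Matrix (Fin N) (Fin ns) ℂ) (hXc : Xc = cplx Qm Pm)
    (Uc : Matrix (Fin N) (Fin k) ℂ) (hUc : Uc = cplx VQ VP) :
    frobNorm (Xs - VE * VEᵀ * Xs) ^ 2 = frobNorm (Xc - Uc * Ucᴴ * Xc) ^ 2 := by
  subst hXs hVE hXc hUc
  have hreal : Matrix.fromRows Qm Pm
        - Matrix.fromBlocks VQ (-VP) VP VQ * (Matrix.fromBlocks VQ (-VP) VP VQ)ᵀ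
          * Matrix.fromRows Qm Pm
      = Matrix.fromRows
          (Qm - ((VQ * VQᵀ + VP * VPᵀ) * Qm - (VP * VQᵀ - VQ * VPᵀ) * Pm))
          (Pm - ((VP * VQᵀ - VQ * VPᵀ) * Qm + (VQ * VQᵀ + VP * VPᵀ) * Pm)) := by
    rw [Matrix.fromBlocks_transpose, Matrix.mul_assoc, Matrix.fromBlocks_mul_fromRows,
      Matrix.fromBlocks_mul_fromRows, fromRows_sub]
    congr 1 <;>
      · simp only [Matrix.transpose_neg, Matrix.add_mul, Matrix.sub_mul, Matrix.neg_mul,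
          Matrix.mul_add, Matrix.mul_sub, Matrix.mul_neg, neg_neg, Matrix.mul_assoc]
        abel
  have hcplx : cplx Qm Pm - cplx VQ VP * (cplx VQ VP)ᴴ * cplx Qm Pm
      = cplx
          (Qm - ((VQ * VQᵀ + VP * VPᵀ) * Qm - (VP * VQᵀ - VQ * VPᵀ) * Pm))
          (Pm - ((VP * VQᵀ - VQ * VPᵀ) * Qm + (VQ * VQᵀ + VP * VPᵀ) * Pm)) := by
    rw [cplx_mul_conjTranspose, aux_mul, cplx_sub]
  rw [hreal, hcplx, frob_fromRows_cplx]

end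
end

section
/- Let A ∈ ℂ^{m×n} with non-increasing singular values σ₁ ≥ σ₂ ≥ …, let U_Y ∈ ℂ^{m×l} have orthonormal columns, set B = U_Y^H·A, let U_B(k) ∈ ℂ^{l×k} consist of the first k left singular vectors of B, and set U^r = U_Y·U_B(k). Then ‖U_Y·U_Y^H·A − U^r·(U^r)^H·A‖_F ≤ √(Σ_{j ≥ k+1} σ_j²). -/
open Matrix MeasureTheory
open scoped BigOperators

noncomputable section

variable {α β γ : Type*} [Fintype α] [Fintype β] [Fintype γ]

lemma traceRe (X : Matrix α β ℂ) [DecidableEq β] :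
    (Matrix.trace (Xᴴ * X)).re = ∑ i, ∑ j, ‖X i j‖ ^ 2 := by
  simp only [Matrix.trace, Matrix.diag, Matrix.mul_apply, Matrix.conjTranspose_apply]
  rw [Complex.re_sum]
  rw [Finset.sum_comm]
  congr 1; ext i
  rw [Complex.re_sum]
  congr 1; ext j
  rw [RCLike.star_def, ← Complex.normSq_eq_conj_mul_self]
  rw [Complex.ofReal_re, Complex.normSq_eq_norm_sq]

lemma traceRe_nonneg (X : Matrix α β ℂ) [DecidableEq β] :
    0 ≤ (Matrix.trace (Xᴴ * X)).re := by
  rw [traceRe]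
  positivity

/-- trace sandwich invariance -/
lemma trace_sandwich {a b n : Type*} [Fintype a] [Fintype b] [Fintype n] [DecidableEq n]
    [DecidableEq b]
    (U : Matrix a b ℂ) (hU : Uᴴ * U = 1)
    (V : Matrix n n ℂ) (hV : Vᴴ * V = 1) (X : Matrix b n ℂ) :
    Matrix.trace ((U * X * Vᴴ)ᴴ * (U * X * Vᴴ)) = Matrix.trace (Xᴴ * X) := by
  have h1 : (U * X * Vᴴ)ᴴ * (U * X * Vᴴ) = V * (Xᴴ * X) * Vᴴ := by
    simp only [Matrix.conjTranspose_mul, Matrix.conjTranspose_conjTranspose, Matrix.mul_assoc]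
    rw [← Matrix.mul_assoc Uᴴ U, hU, Matrix.one_mul]
  rw [h1, Matrix.trace_mul_cycle, ← Matrix.mul_assoc, hV, Matrix.one_mul]

/-- contraction under isometry on the left -/
lemma traceRe_isometry_le {a b n : Type*} [Fintype a] [Fintype b] [Fintype n]
    [DecidableEq n] [DecidableEq b] [DecidableEq a]
    (U : Matrix a b ℂ) (hU : Uᴴ * U = 1) (X : Matrix a n ℂ) :
    (Matrix.trace ((Uᴴ * X)ᴴ * (Uᴴ * X))).re ≤ (Matrix.trace (Xᴴ * X)).re := by
  set P : Matrix a a ℂ := 1 - U * Uᴴ with hPdef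
  have hUU : U * Uᴴ * (U * Uᴴ) = U * Uᴴ := by
    calc U * Uᴴ * (U * Uᴴ) = U * (Uᴴ * U) * Uᴴ := by simp only [Matrix.mul_assoc]
      _ = U * Uᴴ := by rw [hU, Matrix.mul_one]
  have hP : Pᴴ * P = P := by
    simp only [hPdef, Matrix.conjTranspose_sub, Matrix.conjTranspose_one,
      Matrix.conjTranspose_mul, Matrix.conjTranspose_conjTranspose, Matrix.sub_mul,
      Matrix.mul_sub, Matrix.one_mul, Matrix.mul_one, hUU]
    abel
  have key : Matrix.trace (Xᴴ * X) = Matrix.trace ((Uᴴ * X)ᴴ * (Uᴴ * X)) +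
      Matrix.trace ((P * X)ᴴ * (P * X)) := by
    have e1 : (P * X)ᴴ * (P * X) = Xᴴ * (P * X) := by
      rw [Matrix.conjTranspose_mul, Matrix.mul_assoc, ← Matrix.mul_assoc Pᴴ, hP,
        ← Matrix.mul_assoc]
    have e2 : (Uᴴ * X)ᴴ * (Uᴴ * X) = Xᴴ * ((U * Uᴴ) * X) := by
      rw [Matrix.conjTranspose_mul, Matrix.conjTranspose_conjTranspose, Matrix.mul_assoc,
        ← Matrix.mul_assoc U, ← Matrix.mul_assoc]
    rw [e1, e2, ← Matrix.trace_add, ← Matrix.mul_add, ← Matrix.add_mul, hPdef,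
      add_sub_cancel, Matrix.one_mul]
  have h2 := traceRe_nonneg (P * X)
  have h3 := congrArg Complex.re key
  rw [Complex.add_re] at h3
  linarith

/-- sum over Fin l of a delta-type function -/
lemma sum_fin_delta {M : Type*} [AddCommMonoid M] {l : ℕ} (j : ℕ) (g : Fin l → M) :
    (∑ i : Fin l, if (i : ℕ) = j then g i else 0) = if h : j < l then g ⟨j, h⟩ else 0 := by
  split_ifs with h
  · rw [Finset.sum_eq_single ⟨j, h⟩]
    · simp
    · intro b _ hb
      rw [if_neg]
      intro hbj
      exact hb (Fin.ext hbj)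
    · simp
  · apply Finset.sum_eq_zero
    intro i _
    rw [if_neg]
    intro hij
    exact h (hij ▸ i.2)

lemma mdm {a b n : Type*} [Fintype a] [Fintype b] [Fintype n] [DecidableEq n]
    (M : Matrix a n ℂ) (d : n → ℂ) (N : Matrix b n ℂ) (i : a) (j : b) :
    (M * Matrix.diagonal d * Nᴴ) i j = ∑ t, M i t * d t * (starRingEnd ℂ) (N j t) := by
  rw [Matrix.mul_apply]
  congr 1; ext t
  rw [Matrix.mul_diagonal, Matrix.conjTranspose_apply, RCLike.star_def]

/-- scalar majorization step -/
lemma maj {n k : ℕ} (μ c : Fin n → ℝ) (hμa : Antitone μ) (hμ0 : ∀ i, 0 ≤ μ i)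
    (hc0 : ∀ i, 0 ≤ c i) (hc1 : ∀ i, c i ≤ 1) (hcs : ∑ i, c i ≤ (k : ℝ)) :
    ∑ i, μ i * c i ≤ ∑ i ∈ Finset.univ.filter (fun i : Fin n => (i : ℕ) < k), μ i := by
  by_cases hk : n ≤ k
  · have hfil : Finset.univ.filter (fun i : Fin n => (i : ℕ) < k) = Finset.univ := by
      apply Finset.filter_true_of_mem
      intro i _
      exact lt_of_lt_of_le i.2 hk
    rw [hfil]
    apply Finset.sum_le_sum
    intro i _
    exact mul_le_of_le_one_right (hμ0 i) (hc1 i)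
  · push_neg at hk
    set t := μ ⟨k, hk⟩ with ht
    have ht0 : 0 ≤ t := hμ0 _
    set S1 := Finset.univ.filter (fun i : Fin n => (i : ℕ) < k) with hS1
    have hScard : (S1.card : ℝ) = k := by
      have : S1 = Finset.Iio (⟨k, hk⟩ : Fin n) := by
        ext x
        simp [hS1, Fin.lt_def]
      rw [this, Fin.card_Iio]
    rw [← Finset.sum_filter_add_sum_filter_not Finset.univ (fun i : Fin n => (i : ℕ) < k)
      (fun i => μ i * c i)]
    have b1 : ∑ i ∈ S1, μ i * c i ≤ ∑ i ∈ S1, (μ i + t * c i - t) := by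
      apply Finset.sum_le_sum
      intro i hi
      have hik : (i : ℕ) < k := by simpa [hS1] using hi
      have hμt : t ≤ μ i := hμa (by exact Fin.mk_le_of_le_val (le_of_lt hik) |>.trans (le_refl _) |>.trans (le_refl _) |>.trans (le_refl _) : i ≤ ⟨k, hk⟩)
      nlinarith [hc1 i, hc0 i]
    have b2 : ∑ i ∈ Finset.univ.filter (fun i : Fin n => ¬ (i : ℕ) < k), μ i * c i ≤
        ∑ i ∈ Finset.univ.filter (fun i : Fin n => ¬ (i : ℕ) < k), t * c i := by
      apply Finset.sum_le_sum
      intro i hi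
      have hik : ¬ (i : ℕ) < k := by simpa using hi
      have hμt : μ i ≤ t := hμa (by
        change (⟨k, hk⟩ : Fin n) ≤ i
        exact Fin.mk_le_of_le_val (le_of_not_gt hik))
      exact mul_le_mul_of_nonneg_right hμt (hc0 i)
    have csplit : ∑ i ∈ S1, c i + ∑ i ∈ Finset.univ.filter (fun i : Fin n => ¬ (i : ℕ) < k), c i
        = ∑ i, c i :=
      Finset.sum_filter_add_sum_filter_not Finset.univ _ c
    have e1 : ∑ i ∈ S1, (μ i + t * c i - t) =
        ∑ i ∈ S1, μ i + t * (∑ i ∈ S1, c i) - t * k := by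
      rw [Finset.sum_sub_distrib, Finset.sum_add_distrib, ← Finset.mul_sum, Finset.sum_const,
        nsmul_eq_mul, hScard]
      ring
    have e2 : ∑ i ∈ Finset.univ.filter (fun i : Fin n => ¬ (i : ℕ) < k), t * c i =
        t * ∑ i ∈ Finset.univ.filter (fun i : Fin n => ¬ (i : ℕ) < k), c i := by
      rw [Finset.mul_sum]
    nlinarith [Finset.sum_le_sum (fun i (_ : i ∈ S1) => hc1 i)]

lemma re_conj_mul (z : ℂ) : ((starRingEnd ℂ) z * z).re = ‖z‖ ^ 2 := by
  rw [← Complex.normSq_eq_conj_mul_self, Complex.ofReal_re, Complex.normSq_eq_norm_sq]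

lemma re_mul_conj (z : ℂ) : (z * (starRingEnd ℂ) z).re = ‖z‖ ^ 2 := by
  rw [mul_comm, re_conj_mul]

/-- Ky Fan type trace inequality -/
lemma kyFan {n κ k : ℕ} (μ : Fin n → ℝ) (hμa : Antitone μ) (hμ0 : ∀ i, 0 ≤ μ i)
    (V : Matrix (Fin n) (Fin n) ℂ) (hV : Vᴴ * V = 1)
    (W : Matrix (Fin n) (Fin κ) ℂ) (hW : Wᴴ * W = 1) (hκ : κ ≤ k) :
    (Matrix.trace (V * Matrix.diagonal (fun i => (μ i : ℂ)) * Vᴴ * (W * Wᴴ))).re ≤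
      ∑ i ∈ Finset.univ.filter (fun i : Fin n => (i : ℕ) < k), μ i := by
  have hVV : V * Vᴴ = 1 := mul_eq_one_comm.mp hV
  set D : Matrix (Fin n) (Fin n) ℂ := Matrix.diagonal (fun i => (μ i : ℂ)) with hD
  set H : Matrix (Fin κ) (Fin n) ℂ := Wᴴ * V with hH
  set G : Matrix (Fin n) (Fin n) ℂ := Hᴴ * H with hG
  have hHH : H * Hᴴ = 1 := by
    rw [hH, Matrix.conjTranspose_mul, Matrix.conjTranspose_conjTranspose, Matrix.mul_assoc,
      ← Matrix.mul_assoc V, hVV, Matrix.one_mul, hW]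
  have hGG : G * G = G := by
    rw [hG, Matrix.mul_assoc, ← Matrix.mul_assoc H, hHH, Matrix.one_mul]
  have hGherm : Gᴴ = G := by
    rw [hG, Matrix.conjTranspose_mul, Matrix.conjTranspose_conjTranspose]
  have htr : Matrix.trace (V * D * Vᴴ * (W * Wᴴ)) = Matrix.trace (G * D) := by
    rw [show V * D * Vᴴ * (W * Wᴴ) = (V * D) * (Vᴴ * (W * Wᴴ)) from by
      simp only [Matrix.mul_assoc], Matrix.trace_mul_comm]
    congr 1
    rw [hG, hH, Matrix.conjTranspose_mul, Matrix.conjTranspose_conjTranspose]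
    simp only [Matrix.mul_assoc]
  rw [htr]
  have htr2 : (Matrix.trace (G * D)).re = ∑ i, μ i * (G i i).re := by
    rw [Matrix.trace, Complex.re_sum]
    congr 1; ext i
    rw [Matrix.diag_apply, hD, Matrix.mul_diagonal]
    simp [Complex.mul_re, mul_comm]
  rw [htr2]
  set c : Fin n → ℝ := fun i => (G i i).re with hc
  have hGdiag : ∀ i, c i = ∑ t, ‖H t i‖ ^ 2 := by
    intro i
    rw [hc]
    simp only [hG, Matrix.mul_apply, Matrix.conjTranspose_apply, RCLike.star_def]
    rw [Complex.re_sum]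
    congr 1; ext t
    exact re_conj_mul _
  have hc0 : ∀ i, 0 ≤ c i := by
    intro i; rw [hGdiag]; positivity
  have hc1 : ∀ i, c i ≤ 1 := by
    intro i
    have hsymm : ∀ a b, G b a = (starRingEnd ℂ) (G a b) := by
      intro a b
      rw [← hGherm, Matrix.conjTranspose_apply, RCLike.star_def, hGherm]
    have hsq : G i i = ∑ t, G i t * (starRingEnd ℂ) (G i t) := by
      conv_lhs => rw [← hGG]
      rw [Matrix.mul_apply]
      exact Finset.sum_congr rfl fun t _ => by rw [hsymm, Complex.conj_conj]
    have h1 : c i = ∑ t, ‖G i t‖ ^ 2 := by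
      show (G i i).re = _
      rw [hsq, Complex.re_sum]
      congr 1; ext t
      exact re_mul_conj _
    have h2 : c i ^ 2 ≤ ‖G i i‖ ^ 2 := by
      show (G i i).re ^ 2 ≤ _
      have := Complex.abs_re_le_norm (G i i)
      nlinarith [abs_nonneg (G i i).re, le_abs_self (G i i).re, neg_abs_le (G i i).re]
    have h3 : ‖G i i‖ ^ 2 ≤ ∑ t, ‖G i t‖ ^ 2 := by
      apply Finset.single_le_sum (f := fun t => ‖G i t‖ ^ 2) (fun t _ => by positivity)
        (Finset.mem_univ i)
    nlinarith [hc0 i]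
  have hcs : ∑ i, c i ≤ (k : ℝ) := by
    have : ∑ i, c i = (Matrix.trace (H * Hᴴ)).re := by
      rw [Matrix.trace_mul_comm, Matrix.trace, Complex.re_sum]
      rfl
    rw [this, hHH, Matrix.trace_one]
    simp only [Complex.natCast_re]
    · norm_num
      exact_mod_cast hκ
  calc ∑ i, μ i * (G i i).re = ∑ i, μ i * c i := rfl
    _ ≤ _ := maj μ c hμa hμ0 hc0 hc1 hcs

lemma submatrix_unitary {n κ : ℕ} (V : Matrix (Fin n) (Fin n) ℂ) (hV : Vᴴ * V = 1)
    (f : Fin κ → Fin n) (hf : Function.Injective f) :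
    (V.submatrix id f)ᴴ * (V.submatrix id f) = 1 := by
  ext i j
  have h1 : ((V.submatrix id f)ᴴ * (V.submatrix id f)) i j = (Vᴴ * V) (f i) (f j) := by
    simp [Matrix.mul_apply, Matrix.submatrix_apply, Matrix.conjTranspose_apply]
  rw [h1, hV]
  simp [Matrix.one_apply, hf.eq_iff]

lemma mul_submatrix_right {α β γ δ : Type*} [Fintype β]
    (M : Matrix α β ℂ) (N : Matrix β γ ℂ) (f : δ → γ) :
    M * N.submatrix id f = (M * N).submatrix id f := by
  ext i j
  simp [Matrix.mul_apply]

lemma trace_sub_proj {a n : Type*} [Fintype a] [Fintype n] [DecidableEq n]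
    (X : Matrix a n ℂ) (Q : Matrix n n ℂ) (hQh : Qᴴ = Q) (hQi : Q * Q = Q) :
    Matrix.trace ((X - X * Q)ᴴ * (X - X * Q)) =
      Matrix.trace (Xᴴ * X) - Matrix.trace (Xᴴ * X * Q) := by
  have e : (X - X * Q)ᴴ * (X - X * Q) =
      Xᴴ * X - Xᴴ * X * Q - (Q * (Xᴴ * X) - Q * (Xᴴ * X * Q)) := by
    rw [Matrix.conjTranspose_sub, Matrix.conjTranspose_mul, hQh, Matrix.sub_mul,
      Matrix.mul_sub, Matrix.mul_sub]
    simp only [Matrix.mul_assoc]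
  rw [e, Matrix.trace_sub, Matrix.trace_sub, Matrix.trace_sub]
  have t1 : Matrix.trace (Q * (Xᴴ * X)) = Matrix.trace (Xᴴ * X * Q) := by
    rw [Matrix.trace_mul_comm]
  have t2 : Matrix.trace (Q * (Xᴴ * X * Q)) = Matrix.trace (Xᴴ * X * Q) := by
    rw [Matrix.trace_mul_comm, Matrix.mul_assoc, hQi]
  rw [t1, t2]
  ring

lemma proj_of_iso {a b : Type*} [Fintype a] [Fintype b] [DecidableEq b]
    (W : Matrix a b ℂ) (hW : Wᴴ * W = 1) : (W * Wᴴ) * (W * Wᴴ) = W * Wᴴ := by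
  calc (W * Wᴴ) * (W * Wᴴ) = W * (Wᴴ * W) * Wᴴ := by simp only [Matrix.mul_assoc]
    _ = W * Wᴴ := by rw [hW, Matrix.mul_one]

lemma sum_fin_lt {M : Type*} [AddCommMonoid M] {l k : ℕ} (hkl : k ≤ l) (f : Fin l → M) :
    ∑ t : Fin l, (if (t : ℕ) < k then f t else 0) = ∑ t : Fin k, f (Fin.castLE hkl t) := by
  rw [← Finset.sum_filter]
  have hfil : Finset.univ.filter (fun t : Fin l => (t : ℕ) < k) =
      Finset.univ.map (Fin.castLEEmb hkl) := by
    ext x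
    simp only [Finset.mem_filter, Finset.mem_univ, true_and, Finset.mem_map,
      Fin.castLEEmb_apply]
    constructor
    · intro h
      exact ⟨⟨x.1, h⟩, Fin.ext rfl⟩
    · rintro ⟨a, rfl⟩
      exact a.2
  rw [hfil, Finset.sum_map]
  rfl

lemma reindex_diag {n : ℕ} (V : Matrix (Fin n) (Fin n) ℂ) (d : Fin n → ℂ)
    (e : Equiv.Perm (Fin n)) :
    (V.submatrix id e) * Matrix.diagonal (d ∘ e) * (V.submatrix id e)ᴴ =
      V * Matrix.diagonal d * Vᴴ := by
  ext a b
  rw [mdm, mdm]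
  exact Fintype.sum_equiv e _ _ (fun j => by simp [Matrix.submatrix_apply])

lemma trace_VDV_WW {n κ : ℕ} (V D : Matrix (Fin n) (Fin n) ℂ)
    (W : Matrix (Fin n) (Fin κ) ℂ) :
    Matrix.trace (V * D * Vᴴ * (W * Wᴴ)) =
      Matrix.trace (((Vᴴ * W) * (Vᴴ * W)ᴴ) * D) := by
  rw [show V * D * Vᴴ * (W * Wᴴ) = (V * D) * (Vᴴ * (W * Wᴴ)) from by
    simp only [Matrix.mul_assoc], Matrix.trace_mul_comm]
  congr 1
  simp only [Matrix.conjTranspose_mul, Matrix.conjTranspose_conjTranspose, Matrix.mul_assoc]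


lemma diagRect_gram (l n : ℕ) (d : ℕ → ℝ) :
    (diagRect l n d)ᴴ * (diagRect l n d) =
      Matrix.diagonal (fun j : Fin n => ((if (j : ℕ) < l then d (j : ℕ) ^ 2 else 0 : ℝ) : ℂ)) := by
  ext a b
  have hterm : ∀ i : Fin l,
      (starRingEnd ℂ) (diagRect l n d i a) * (diagRect l n d i b) =
      if (i : ℕ) = (a : ℕ) then
        (if (a : ℕ) = (b : ℕ) then ((d (i : ℕ) ^ 2 : ℝ) : ℂ) else 0) else 0 := by
    intro i
    simp only [diagRect, Matrix.of_apply]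
    split_ifs <;> simp_all [Complex.conj_ofReal] <;> push_cast <;> ring
  rw [Matrix.mul_apply]
  rw [Finset.sum_congr rfl (fun i (_ : i ∈ Finset.univ) => by
    rw [Matrix.conjTranspose_apply, RCLike.star_def, hterm i])]
  rw [sum_fin_delta ((a : ℕ)) (fun i : Fin l =>
    if (a : ℕ) = (b : ℕ) then ((d (i : ℕ) ^ 2 : ℝ) : ℂ) else 0)]
  rw [Matrix.diagonal_apply]
  by_cases hab : a = b
  · subst hab
    simp only [if_pos rfl]
    split_ifs <;> simp
  · have hab' : ¬ (a : ℕ) = (b : ℕ) := fun h => hab (Fin.ext h)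
    rw [if_neg hab]
    split_ifs <;> simp_all

lemma norm_ofReal_sq (r : ℝ) : ‖(r : ℂ)‖ ^ 2 = r ^ 2 := by
  rw [Complex.norm_real, Real.norm_eq_abs, sq_abs]

lemma frobNorm_eq {α β : Type*} [Fintype α] [Fintype β] [DecidableEq β] (X : Matrix α β ℂ) :
    frobNorm X = Real.sqrt ((Matrix.trace (Xᴴ * X)).re) := by
  rw [frobNorm, traceRe]

set_option maxHeartbeats 1000000 in
theorem stmt6 {m n l k : ℕ} (hkl : k ≤ l)
    (A : Matrix (Fin m) (Fin n) ℂ)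
    (UY : Matrix (Fin m) (Fin l) ℂ) (hUY : UYᴴ * UY = 1)
    (UB : Matrix (Fin l) (Fin l) ℂ) (dB : ℕ → ℝ) (VB : Matrix (Fin n) (Fin n) ℂ)
    (hB : IsSVD (UYᴴ * A) UB dB VB)
    (Ur : Matrix (Fin m) (Fin k) ℂ) (hUr : Ur = UY * UB.submatrix id (Fin.castLE hkl)) :
    frobNorm (UY * UYᴴ * A - Ur * Urᴴ * A) ≤
      Real.sqrt (∑ j ∈ Finset.Icc (k + 1) n, sval A j ^ 2) := by
  classical
  obtain ⟨hUBu, hVBu, hdBa, hdB0, hBsvd⟩ := hB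
  set DR : Matrix (Fin l) (Fin n) ℂ := diagRect l n dB with hDR
  set TR : Matrix (Fin l) (Fin n) ℂ := truncDiagRect l n k dB with hTR
  set Dt : Matrix (Fin l) (Fin n) ℂ := DR - TR with hDt
  set μ : Fin n → ℝ := fun j => if (j : ℕ) < l then dB (j : ℕ) ^ 2 else 0 with hμ
  have hμ0 : ∀ i, 0 ≤ μ i := by
    intro i
    simp only [hμ]
    split_ifs
    · positivity
    · exact le_rfl
  have hμa : Antitone μ := by
    intro i j hij
    simp only [hμ]
    have hij' : (i : ℕ) ≤ (j : ℕ) := hij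
    split_ifs with h1 h2
    · exact pow_le_pow_left₀ (hdB0 _) (hdBa hij') 2
    · exfalso; omega
    · positivity
    · exact le_rfl
  have hUBUB : UB * UBᴴ = 1 := mul_eq_one_comm.mp hUBu
  have hU2 : (UY * UB)ᴴ * (UY * UB) = 1 := by
    rw [Matrix.conjTranspose_mul, Matrix.mul_assoc, ← Matrix.mul_assoc UYᴴ, hUY,
      Matrix.one_mul, hUBu]
  set S : Matrix (Fin l) (Fin k) ℂ := UB.submatrix id (Fin.castLE hkl) with hS
  set Ek : Matrix (Fin l) (Fin l) ℂ :=
    Matrix.diagonal (fun t => if (t : ℕ) < k then 1 else 0) with hEk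
  have hSS : S * Sᴴ = UB * Ek * UBᴴ := by
    ext i j
    rw [hEk, mdm]
    simp only [mul_ite, mul_one, mul_zero, ite_mul, zero_mul]
    rw [sum_fin_lt hkl (fun t => UB i t * (starRingEnd ℂ) (UB j t))]
    simp [Matrix.mul_apply, hS, Matrix.conjTranspose_apply, RCLike.star_def]
  have hEkD : Ek * DR = TR := by
    ext i j
    rw [hEk, hDR, hTR, Matrix.diagonal_mul]
    simp only [diagRect, truncDiagRect, Matrix.of_apply]
    split_ifs <;> first | (exfalso; omega) | simp
  have hUrUr : Ur * Urᴴ * A = UY * UB * TR * VBᴴ := by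
    calc Ur * Urᴴ * A = UY * (S * Sᴴ) * (UYᴴ * A) := by
          rw [hUr]; simp only [Matrix.conjTranspose_mul, Matrix.mul_assoc]
      _ = UY * (UB * Ek * UBᴴ) * (UB * DR * VBᴴ) := by rw [hSS, hBsvd]
      _ = UY * UB * (Ek * (UBᴴ * UB) * DR) * VBᴴ := by simp only [Matrix.mul_assoc]
      _ = UY * UB * TR * VBᴴ := by rw [hUBu, Matrix.mul_one, hEkD]
  have hUyA : UY * UYᴴ * A = UY * UB * DR * VBᴴ := by
    calc UY * UYᴴ * A = UY * (UYᴴ * A) := by rw [Matrix.mul_assoc]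
      _ = UY * (UB * DR * VBᴴ) := by rw [hBsvd]
      _ = UY * UB * DR * VBᴴ := by simp only [Matrix.mul_assoc]
  have hDiff : UY * UYᴴ * A - Ur * Urᴴ * A = (UY * UB) * Dt * VBᴴ := by
    rw [hUyA, hUrUr, hDt, Matrix.mul_sub, Matrix.sub_mul]
  have hBB : (UYᴴ * A)ᴴ * (UYᴴ * A) = VB * Matrix.diagonal (fun j => (μ j : ℂ)) * VBᴴ := by
    rw [hBsvd]
    have h1 : (UB * DR * VBᴴ)ᴴ * (UB * DR * VBᴴ) = VB * (DRᴴ * DR) * VBᴴ := by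
      simp only [Matrix.conjTranspose_mul, Matrix.conjTranspose_conjTranspose,
        Matrix.mul_assoc]
      rw [← Matrix.mul_assoc UBᴴ UB, hUBu, Matrix.one_mul]
    rw [h1, hDR, diagRect_gram]
  have hFB : (Matrix.trace ((UYᴴ * A)ᴴ * (UYᴴ * A))).re = ∑ i, μ i := by
    rw [hBB, Matrix.trace_mul_cycle, hVBu, Matrix.one_mul, Matrix.trace_diagonal,
      Complex.re_sum]
    simp
  set π : Equiv.Perm (Fin n) :=
    Tuple.sort (Matrix.isHermitian_conjTranspose_mul_self A).eigenvalues with hπ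
  set ν : Fin n → ℝ :=
    fun j => (Matrix.isHermitian_conjTranspose_mul_self A).eigenvalues (π j.rev) with hν
  have hν0 : ∀ j, 0 ≤ ν j := fun j =>
    Matrix.eigenvalues_conjTranspose_mul_self_nonneg A _
  set e : Equiv.Perm (Fin n) := Fin.revPerm.trans π with he
  set VU : Matrix (Fin n) (Fin n) ℂ :=
    ((Matrix.isHermitian_conjTranspose_mul_self A).eigenvectorUnitary : Matrix (Fin n) (Fin n) ℂ)
    with hVU
  have hVUu : VUᴴ * VU = 1 := by
    have h := Unitary.coe_star_mul_self
      ((Matrix.isHermitian_conjTranspose_mul_self A).eigenvectorUnitary)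
    simpa [Matrix.star_eq_conjTranspose, hVU] using h
  set V' : Matrix (Fin n) (Fin n) ℂ := VU.submatrix id e with hV'def
  have hV'u : V'ᴴ * V' = 1 := submatrix_unitary VU hVUu e e.injective
  have hAspec : Aᴴ * A = V' * Matrix.diagonal (fun j => (ν j : ℂ)) * V'ᴴ := by
    have h0 := (Matrix.isHermitian_conjTranspose_mul_self A).spectral_theorem
    have h1 := reindex_diag VU
      (RCLike.ofReal ∘ (Matrix.isHermitian_conjTranspose_mul_self A).eigenvalues) e
    have h2 : ((RCLike.ofReal ∘ (Matrix.isHermitian_conjTranspose_mul_self A).eigenvalues) ∘ ⇑e)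
        = fun j => ((ν j : ℝ) : ℂ) := by
      funext j
      simp [he, hν, Fin.revPerm]
    rw [h2] at h1
    rw [← hV'def] at h1
    rw [h1, ← Matrix.star_eq_conjTranspose]
    exact h0
  set k' : ℕ := min k n with hk'
  set W : Matrix (Fin n) (Fin k') ℂ := V'.submatrix id (Fin.castLE (min_le_right k n)) with hWdef
  have hWu : Wᴴ * W = 1 :=
    submatrix_unitary V' hV'u _ (Fin.castLE_injective _)
  set Q : Matrix (Fin n) (Fin n) ℂ := W * Wᴴ with hQ
  have hQh : Qᴴ = Q := by
    rw [hQ, Matrix.conjTranspose_mul, Matrix.conjTranspose_conjTranspose]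
  have hQi : Q * Q = Q := proj_of_iso W hWu
  have hLHS : (Matrix.trace ((UY * UYᴴ * A - Ur * Urᴴ * A)ᴴ *
      (UY * UYᴴ * A - Ur * Urᴴ * A))).re
      = ∑ j ∈ Finset.univ.filter (fun j : Fin n => ¬ (j : ℕ) < k), μ j := by
    rw [hDiff, trace_sandwich (UY * UB) hU2 VB hVBu Dt, traceRe, Finset.sum_comm,
      Finset.sum_filter]
    apply Finset.sum_congr rfl
    intro j _
    have hDtij : ∀ i : Fin l, Dt i j =
        if (i : ℕ) = (j : ℕ) then (if (i : ℕ) < k then 0 else (dB (i : ℕ) : ℂ)) else 0 := by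
      intro i
      rw [hDt, hDR, hTR]
      simp only [Matrix.sub_apply, diagRect, truncDiagRect, Matrix.of_apply]
      split_ifs <;> first | (exfalso; omega) | simp
    calc ∑ i, ‖Dt i j‖ ^ 2
        = ∑ i : Fin l, (if (i : ℕ) = (j : ℕ) then
            (if (i : ℕ) < k then 0 else dB (i : ℕ) ^ 2) else 0) := by
          apply Finset.sum_congr rfl
          intro i _
          rw [hDtij i]
          split_ifs <;> simp [norm_ofReal_sq]
      _ = if h : (j : ℕ) < l then (if (j : ℕ) < k then 0 else dB (j : ℕ) ^ 2) else 0 := by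
          rw [sum_fin_delta ((j : ℕ)) (fun i : Fin l =>
            if (i : ℕ) < k then 0 else dB (i : ℕ) ^ 2)]
      _ = (if ¬ (j : ℕ) < k then μ j else 0) := by
          simp only [hμ]
          split_ifs <;> first | rfl | (exfalso; omega)
  have hKF : (Matrix.trace ((UYᴴ * A)ᴴ * (UYᴴ * A) * Q)).re ≤
      ∑ j ∈ Finset.univ.filter (fun j : Fin n => (j : ℕ) < k), μ j := by
    rw [hBB, hQ]
    exact kyFan μ hμa hμ0 VB hVBu W hWu (min_le_left k n)
  have hsplitμ := Finset.sum_filter_add_sum_filter_not (Finset.univ : Finset (Fin n))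
    (fun j : Fin n => (j : ℕ) < k) μ
  have hstep1 : (Matrix.trace ((UY * UYᴴ * A - Ur * Urᴴ * A)ᴴ *
      (UY * UYᴴ * A - Ur * Urᴴ * A))).re ≤
      (Matrix.trace (((UYᴴ * A) - (UYᴴ * A) * Q)ᴴ * ((UYᴴ * A) - (UYᴴ * A) * Q))).re := by
    rw [hLHS, trace_sub_proj (UYᴴ * A) Q hQh hQi, Complex.sub_re]
    linarith [hKF, hFB, hsplitμ]
  have hiso : (Matrix.trace (((UYᴴ * A) - (UYᴴ * A) * Q)ᴴ *
      ((UYᴴ * A) - (UYᴴ * A) * Q))).re ≤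
      (Matrix.trace ((A - A * Q)ᴴ * (A - A * Q))).re := by
    have hfac : (UYᴴ * A) - (UYᴴ * A) * Q = UYᴴ * (A - A * Q) := by
      rw [Matrix.mul_sub, Matrix.mul_assoc]
    rw [hfac]
    exact traceRe_isometry_le UY hUY (A - A * Q)
  have hFA : (Matrix.trace (Aᴴ * A)).re = ∑ i, ν i := by
    rw [hAspec, Matrix.trace_mul_cycle, hV'u, Matrix.one_mul, Matrix.trace_diagonal,
      Complex.re_sum]
    simp
  have hAQ : (Matrix.trace (Aᴴ * A * Q)).re =
      ∑ i ∈ Finset.univ.filter (fun i : Fin n => (i : ℕ) < k'), ν i := by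
    rw [hAspec, hQ, trace_VDV_WW]
    have hJ : V'ᴴ * W =
        (1 : Matrix (Fin n) (Fin n) ℂ).submatrix id (Fin.castLE (min_le_right k n)) := by
      rw [hWdef, mul_submatrix_right, hV'u]
    rw [hJ, Matrix.trace, Complex.re_sum, Finset.sum_filter]
    apply Finset.sum_congr rfl
    intro i _
    rw [Matrix.diag_apply, Matrix.mul_diagonal]
    have hJJ : ((1 : Matrix (Fin n) (Fin n) ℂ).submatrix id (Fin.castLE (min_le_right k n)) *
        ((1 : Matrix (Fin n) (Fin n) ℂ).submatrix id (Fin.castLE (min_le_right k n)))ᴴ) i i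
        = if (i : ℕ) < k' then 1 else 0 := by
      rw [Matrix.mul_apply]
      have hterm : ∀ t : Fin k',
          (1 : Matrix (Fin n) (Fin n) ℂ).submatrix id (Fin.castLE (min_le_right k n)) i t *
          ((1 : Matrix (Fin n) (Fin n) ℂ).submatrix id (Fin.castLE (min_le_right k n)))ᴴ t i
          = if (t : ℕ) = (i : ℕ) then 1 else 0 := by
        intro t
        simp only [Matrix.submatrix_apply, Matrix.conjTranspose_apply, id_eq,
          Matrix.one_apply]
        by_cases h : i = Fin.castLE (min_le_right k n) t
        · rw [if_pos h, star_one, mul_one, if_pos (by rw [h, Fin.coe_castLE])]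
        · rw [if_neg h, zero_mul, if_neg (fun hti => h (Fin.ext hti.symm))]
      rw [Finset.sum_congr rfl (fun t _ => hterm t),
        sum_fin_delta ((i : ℕ)) (fun _ : Fin k' => (1 : ℂ))]
      split_ifs <;> rfl
    rw [hJJ]
    split_ifs <;> simp
  have hfiltereq : (Finset.univ.filter (fun i : Fin n => (i : ℕ) < k')) =
      (Finset.univ.filter (fun i : Fin n => (i : ℕ) < k)) := by
    apply Finset.filter_congr
    intro i _
    have := i.2
    simp only [hk', eq_iff_iff]
    omega
  have hsplitν := Finset.sum_filter_add_sum_filter_not (Finset.univ : Finset (Fin n))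
    (fun j : Fin n => (j : ℕ) < k) ν
  have hRHS2 : (Matrix.trace ((A - A * Q)ᴴ * (A - A * Q))).re =
      ∑ i ∈ Finset.univ.filter (fun i : Fin n => ¬ (i : ℕ) < k), ν i := by
    rw [trace_sub_proj A Q hQh hQi, Complex.sub_re, hFA, hAQ, hfiltereq]
    linarith [hsplitν]
  have hsval : ∑ j ∈ Finset.Icc (k + 1) n, sval A j ^ 2 =
      ∑ i ∈ Finset.univ.filter (fun i : Fin n => ¬ (i : ℕ) < k), ν i := by
    exact Finset.sum_bij'
      (fun (j : ℕ) (hj : j ∈ Finset.Icc (k + 1) n) =>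
        (⟨j - 1, by rw [Finset.mem_Icc] at hj; omega⟩ : Fin n))
      (fun (i : Fin n) _ => (i : ℕ) + 1)
      (by
        intro a ha
        rw [Finset.mem_Icc] at ha
        simp only [Finset.mem_filter, Finset.mem_univ, true_and]
        omega)
      (by
        intro a ha
        simp only [Finset.mem_filter, Finset.mem_univ, true_and] at ha
        have h2 := a.2
        simp only [Finset.mem_Icc]
        show k + 1 ≤ (a : ℕ) + 1 ∧ (a : ℕ) + 1 ≤ n
        omega)
      (by
        intro a ha
        rw [Finset.mem_Icc] at ha
        show (⟨a - 1, _⟩ : Fin n).val + 1 = a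
        simp only [Fin.val_mk]
        omega)
      (by
        intro a ha
        apply Fin.ext
        simp)
      (by
        intro a ha
        rw [Finset.mem_Icc] at ha
        have hlt : a - 1 < n := by omega
        rw [sval, dif_pos hlt, svalFin,
          Real.sq_sqrt (Matrix.eigenvalues_conjTranspose_mul_self_nonneg A _)])
  rw [frobNorm_eq, hsval]
  apply Real.sqrt_le_sqrt
  calc (Matrix.trace ((UY * UYᴴ * A - Ur * Urᴴ * A)ᴴ *
          (UY * UYᴴ * A - Ur * Urᴴ * A))).re
      ≤ (Matrix.trace (((UYᴴ * A) - (UYᴴ * A) * Q)ᴴ *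
          ((UYᴴ * A) - (UYᴴ * A) * Q))).re := hstep1
    _ ≤ (Matrix.trace ((A - A * Q)ᴴ * (A - A * Q))).re := hiso
    _ = ∑ i ∈ Finset.univ.filter (fun i : Fin n => ¬ (i : ℕ) < k), ν i := hRHS2

end
end

section
/- Let A ∈ ℂ^{m×n} and let Q ∈ ℂ^{m×k} have orthonormal columns. Let B_(k) denote the rank-k truncated SVD of Q^H·A and let A_(k) denote the rank-k truncated SVD of A. Then ‖A − Q·B_(k)‖_F ≤ ‖A − Q·Q^H·A_(k)‖_F. -/
open Matrix MeasureTheory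
open scoped BigOperators

noncomputable section

lemma frob_tr' {m n : Type*} [Fintype m] [Fintype n] (M : Matrix m n ℂ) :
    ∑ i, ∑ j, ‖M i j‖^2 = (Matrix.trace (Mᴴ * M)).re := by
  rw [Finset.sum_comm, Matrix.trace, Complex.re_sum]
  refine Finset.sum_congr rfl fun j _ => ?_
  rw [Matrix.diag_apply, Matrix.mul_apply, Complex.re_sum]
  refine Finset.sum_congr rfl fun i _ => ?_
  rw [Matrix.conjTranspose_apply]
  rw [Complex.sq_norm, Complex.normSq_apply, Complex.mul_re]
  simp

lemma frob_pyth' {m n : Type*} [Fintype m] [Fintype n] (X Y : Matrix m n ℂ)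
    (h : Xᴴ * Y = 0) : frobNorm X ≤ frobNorm (X + Y) := by
  have hYX : Yᴴ * X = 0 := by
    have := congrArg Matrix.conjTranspose h
    simpa [Matrix.conjTranspose_mul] using this
  have expand : (X + Y)ᴴ * (X + Y) = Xᴴ * X + Yᴴ * Y := by
    rw [Matrix.conjTranspose_add, Matrix.add_mul, Matrix.mul_add, Matrix.mul_add, h, hYX]
    abel
  have hy : (0:ℝ) ≤ (Matrix.trace (Yᴴ * Y)).re := by
    rw [← frob_tr']; positivity
  unfold frobNorm
  apply Real.sqrt_le_sqrt
  rw [frob_tr' X, frob_tr' (X + Y), expand, Matrix.trace_add, Complex.add_re]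
  linarith

theorem stmt10 {m n k : ℕ} (A : Matrix (Fin m) (Fin n) ℂ)
    (Q : Matrix (Fin m) (Fin k) ℂ) (hQ : Qᴴ * Q = 1)
    (Bk : Matrix (Fin k) (Fin n) ℂ) (hBk : IsTruncSVD (Qᴴ * A) k Bk)
    (Ak : Matrix (Fin m) (Fin n) ℂ) (hAk : IsTruncSVD A k Ak) :
    frobNorm (A - Q * Bk) ≤ frobNorm (A - Q * Qᴴ * Ak) := by
  obtain ⟨U, d, V, ⟨hU, hV, hd, hd0, hA⟩, hBkeq⟩ := hBk
  have htrunc : truncDiagRect k n k d = diagRect k n d := by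
    ext i j
    simp [truncDiagRect, diagRect, i.isLt]
  have hBkA : Bk = Qᴴ * A := by rw [hBkeq, htrunc, ← hA]
  have hQX : Qᴴ * (A - Q * (Qᴴ * A)) = 0 := by
    rw [Matrix.mul_sub, ← Matrix.mul_assoc, hQ, Matrix.one_mul, sub_self]
  have hXQ : (A - Q * (Qᴴ * A))ᴴ * Q = 0 := by
    calc (A - Q * (Qᴴ * A))ᴴ * Q = (Qᴴ * (A - Q * (Qᴴ * A)))ᴴ := by
          rw [Matrix.conjTranspose_mul, Matrix.conjTranspose_conjTranspose]
      _ = 0 := by rw [hQX, Matrix.conjTranspose_zero]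
  have hXY : (A - Q * (Qᴴ * A))ᴴ * (Q * (Qᴴ * (A - Ak))) = 0 := by
    rw [← Matrix.mul_assoc, hXQ, Matrix.zero_mul]
  have e1 : A - Q * Bk = A - Q * (Qᴴ * A) := by rw [hBkA]
  have e2 : A - Q * Qᴴ * Ak =
      (A - Q * (Qᴴ * A)) + Q * (Qᴴ * (A - Ak)) := by
    rw [Matrix.mul_sub, Matrix.mul_sub, Matrix.mul_assoc]
    abel
  rw [e1, e2]
  exact frob_pyth' _ _ hXY


end
end

section
/- Let A ∈ ℂ^{m×n} with non-increasing singular values σ₁ ≥ σ₂ ≥ …, let Q ∈ ℂ^{m×k} have orthonormal columns, and let A_(k) denote the rank-k truncated SVD of A. Then ‖A − Q·Q^H·A_(k)‖_F ≤ √( ‖(I_m − Q·Q^H)·A_(k)‖_F² + Σ_{j ≥ k+1} σ_j² ). -/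
open Matrix MeasureTheory
open scoped BigOperators

noncomputable section

namespace Stmt11Aux

open Polynomial

/-- squared Frobenius norm as a sum. -/
def frobSq {m n : Type*} [Fintype m] [Fintype n] (A : Matrix m n ℂ) : ℝ :=
  ∑ i, ∑ j, ‖A i j‖ ^ 2

lemma frobSq_eq_trace {m n : Type*} [Fintype m] [Fintype n] (A : Matrix m n ℂ) :
    frobSq A = ((Aᴴ * A).trace).re := by
  rw [frobSq, Matrix.trace]
  rw [Finset.sum_comm]
  rw [Complex.re_sum]
  refine Finset.sum_congr rfl fun j _ => ?_
  rw [Matrix.diag_apply, Matrix.mul_apply, Complex.re_sum]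
  refine Finset.sum_congr rfl fun i _ => ?_
  have hs : star (A i j) * A i j = (Complex.normSq (A i j) : ℂ) := by
    rw [mul_comm]; exact Complex.mul_conj _
  rw [Matrix.conjTranspose_apply, hs, Complex.ofReal_re, ← Complex.sq_norm]

lemma frobSq_nonneg {m n : Type*} [Fintype m] [Fintype n] (A : Matrix m n ℂ) :
    0 ≤ frobSq A :=
  Finset.sum_nonneg fun _ _ => Finset.sum_nonneg fun _ _ => by positivity

lemma frobSq_unitary_conj {m n : ℕ} (U : Matrix (Fin m) (Fin m) ℂ)
    (V : Matrix (Fin n) (Fin n) ℂ) (X : Matrix (Fin m) (Fin n) ℂ)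
    (hU : Uᴴ * U = 1) (hV : Vᴴ * V = 1) :
    frobSq (U * X * Vᴴ) = frobSq X := by
  rw [frobSq_eq_trace, frobSq_eq_trace]
  congr 1
  have : (U * X * Vᴴ)ᴴ * (U * X * Vᴴ) = V * (Xᴴ * X) * Vᴴ := by
    simp only [Matrix.conjTranspose_mul, Matrix.conjTranspose_conjTranspose, Matrix.mul_assoc]
    rw [← Matrix.mul_assoc Uᴴ U, hU, Matrix.one_mul]
  rw [this, Matrix.trace_mul_comm, ← Matrix.mul_assoc, hV, Matrix.one_mul]

lemma frobSq_add_of_orth {m n : ℕ} (X Y : Matrix (Fin m) (Fin n) ℂ)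
    (h : (Xᴴ * Y).trace = 0) : frobSq (X + Y) = frobSq X + frobSq Y := by
  have h' : (Yᴴ * X).trace = 0 := by
    have : (Yᴴ * X) = (Xᴴ * Y)ᴴ := by simp
    rw [this, Matrix.trace_conjTranspose, h, star_zero]
  rw [frobSq_eq_trace, frobSq_eq_trace, frobSq_eq_trace]
  have : (X + Y)ᴴ * (X + Y) = Xᴴ * X + (Xᴴ * Y + (Yᴴ * X + Yᴴ * Y)) := by
    rw [Matrix.conjTranspose_add]
    rw [Matrix.add_mul, Matrix.mul_add, Matrix.mul_add]
    abel
  rw [this]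
  simp [Matrix.trace_add, h, h']

lemma charpoly_conj_unitary {n : ℕ} (P M : Matrix (Fin n) (Fin n) ℂ) (h : P * Pᴴ = 1) :
    (P * M * Pᴴ).charpoly = M.charpoly := by
  have hP : (C.mapMatrix P) * (C.mapMatrix Pᴴ) = (1 : Matrix (Fin n) (Fin n) ℂ[X]) := by
    rw [← _root_.map_mul C.mapMatrix P Pᴴ, h, _root_.map_one]
  have key : Matrix.charmatrix (P * M * Pᴴ) =
      ((C : ℂ →+* ℂ[X]).mapMatrix P) * Matrix.charmatrix M * ((C : ℂ →+* ℂ[X]).mapMatrix Pᴴ) := by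
    rw [Matrix.charmatrix, Matrix.charmatrix, Matrix.mul_sub, Matrix.sub_mul]
    congr 1
    · rw [Matrix.scalar_apply, ← Matrix.smul_one_eq_diagonal, mul_smul_comm, smul_mul_assoc,
        Matrix.mul_one, hP]
    · rw [← _root_.map_mul C.mapMatrix, ← _root_.map_mul C.mapMatrix]
  rw [Matrix.charpoly, Matrix.charpoly, key, Matrix.det_mul, Matrix.det_mul, mul_right_comm,
    ← Matrix.det_mul, hP, Matrix.det_one, one_mul]

lemma charpoly_diag {n : ℕ} (d : Fin n → ℂ) :
    (Matrix.diagonal d).charpoly = ∏ i, (X - C (d i)) := by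
  have := Matrix.charpoly_of_upperTriangular (Matrix.diagonal d)
    (Matrix.blockTriangular_diagonal d)
  simpa using this

lemma mono_unique {n : ℕ} {f g : Fin n → ℝ} (hf : Monotone f) (hg : Monotone g)
    (h : Multiset.map f Finset.univ.val = Multiset.map g Finset.univ.val) : f = g := by
  apply List.ofFn_injective
  refine List.Perm.eq_of_sortedLE hf.sortedLE_ofFn hg.sortedLE_ofFn ?_
  rw [← Multiset.coe_eq_coe]
  have e : ∀ (u : Fin n → ℝ), (↑(List.ofFn u) : Multiset ℝ) = Multiset.map u Finset.univ.val := by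
    intro u
    rw [List.ofFn_eq_map, ← Multiset.map_coe]
    rfl
  rw [e, e, h]

lemma prod_roots {n : ℕ} (u : Fin n → ℂ) :
    (∏ i, (X - C (u i))).roots = Multiset.map u Finset.univ.val := by
  have h := Polynomial.roots_multiset_prod_X_sub_C (Multiset.map u Finset.univ.val)
  rw [Multiset.map_map] at h
  rw [Finset.prod_eq_multiset_prod]
  exact h

lemma eigen_multiset {n : ℕ} (B : Matrix (Fin n) (Fin n) ℂ) (hB : B.IsHermitian)
    (V : Matrix (Fin n) (Fin n) ℂ) (f : Fin n → ℝ) (hV : Vᴴ * V = 1)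
    (hBV : B = V * Matrix.diagonal (fun i => (f i : ℂ)) * Vᴴ) :
    Multiset.map f Finset.univ.val = Multiset.map hB.eigenvalues Finset.univ.val := by
  have hV' : V * Vᴴ = 1 := mul_eq_one_comm.mp hV
  set W : Matrix (Fin n) (Fin n) ℂ := (hB.eigenvectorUnitary : Matrix (Fin n) (Fin n) ℂ)
    with hWdef
  have hW : Wᴴ * W = 1 := by
    have := hB.eigenvectorUnitary.2
    rw [Matrix.mem_unitaryGroup_iff'] at this
    simpa [hWdef, Matrix.star_eq_conjTranspose] using this
  have hW' : W * Wᴴ = 1 := mul_eq_one_comm.mp hW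
  have hspec : B = W * Matrix.diagonal (fun i => ((hB.eigenvalues i : ℝ) : ℂ)) * Wᴴ :=
    hB.spectral_theorem
  have e1 : B.charpoly = (Matrix.diagonal fun i => ((f i : ℝ) : ℂ)).charpoly := by
    conv_lhs => rw [hBV]
    exact charpoly_conj_unitary V _ hV'
  have e2 : B.charpoly = (Matrix.diagonal fun i => ((hB.eigenvalues i : ℝ) : ℂ)).charpoly := by
    conv_lhs => rw [hspec]
    exact charpoly_conj_unitary W _ hW'
  have h1 := e1.symm.trans e2
  rw [charpoly_diag, charpoly_diag] at h1
  have h2 := congrArg Polynomial.roots h1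
  rw [prod_roots, prod_roots] at h2
  have h3 : Multiset.map Complex.ofReal (Multiset.map f Finset.univ.val)
      = Multiset.map Complex.ofReal (Multiset.map hB.eigenvalues Finset.univ.val) := by
    rw [Multiset.map_map, Multiset.map_map]
    exact h2
  exact Multiset.map_injective Complex.ofReal_injective h3

lemma perm_map_univ {n : ℕ} (σ : Equiv.Perm (Fin n)) (u : Fin n → ℝ) :
    Multiset.map (u ∘ σ) Finset.univ.val = Multiset.map u Finset.univ.val := by
  rw [← Multiset.map_map]
  congr 1
  have h := Finset.map_univ_equiv σ
  calc Multiset.map (⇑σ) Finset.univ.val = (Finset.univ.map σ.toEmbedding).val := by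
        rw [Finset.map_val]; rfl
    _ = Finset.univ.val := by rw [h]

lemma antitone_eq_sorted {n : ℕ} (μ : Fin n → ℝ) (f : Fin n → ℝ) (hf : Antitone f)
    (h : Multiset.map f Finset.univ.val = Multiset.map μ Finset.univ.val) (j : Fin n) :
    f j = μ (Tuple.sort μ j.rev) := by
  set g : Fin n → ℝ := fun j => μ (Tuple.sort μ j.rev) with hgdef
  have hg : g ∘ Fin.rev = μ ∘ ⇑(Tuple.sort μ) := funext fun i => by
    simp [hgdef, Fin.rev_rev]
  have hmono1 : Monotone (f ∘ Fin.rev) := fun i j hij => hf (Fin.rev_le_rev.mpr hij)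
  have hmono2 : Monotone (g ∘ Fin.rev) := hg ▸ Tuple.monotone_sort μ
  have hms : Multiset.map (f ∘ Fin.rev) Finset.univ.val
      = Multiset.map (g ∘ Fin.rev) Finset.univ.val := by
    have e1 := perm_map_univ (Fin.revPerm (n := n)) f
    have hrevcoe : ⇑(Fin.revPerm (n := n)) = Fin.rev := rfl
    rw [hrevcoe] at e1
    rw [e1, hg, perm_map_univ (Tuple.sort μ) μ]
    exact h
  have := mono_unique hmono1 hmono2 hms
  have := congrFun this j.rev
  simpa [Fin.rev_rev] using this

end Stmt11Aux

namespace Stmt11Aux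

lemma diagRect_conjT_mul (m n : ℕ) (d : ℕ → ℝ) :
    (diagRect m n d)ᴴ * diagRect m n d
      = Matrix.diagonal (fun p : Fin n =>
          (((if (p : ℕ) < m then d (p : ℕ) ^ 2 else 0 : ℝ)) : ℂ)) := by
  ext p q
  rw [Matrix.mul_apply, Matrix.diagonal_apply]
  by_cases hpq : p = q
  · subst hpq
    simp only [if_pos rfl]
    by_cases hp : (p : ℕ) < m
    · rw [if_pos hp]
      rw [Finset.sum_eq_single (⟨(p : ℕ), hp⟩ : Fin m)]
      · simp [diagRect, Matrix.conjTranspose_apply]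
        push_cast
        ring
      · intro i _ hi
        have : ¬ ((i : ℕ) = (p : ℕ)) := fun hc => hi (by ext; exact hc)
        simp [diagRect, Matrix.conjTranspose_apply, this]
      · intro hc
        exact absurd (Finset.mem_univ _) hc
    · rw [if_neg hp]
      refine Finset.sum_eq_zero fun i _ => ?_
      have : ¬ ((i : ℕ) = (p : ℕ)) := fun hc => hp (hc ▸ i.2)
      simp [diagRect, Matrix.conjTranspose_apply, this]
  · rw [if_neg hpq]
    refine Finset.sum_eq_zero fun i _ => ?_
    have hpq' : (p : ℕ) ≠ (q : ℕ) := fun hc => hpq (Fin.ext hc)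
    by_cases hip : (i : ℕ) = (p : ℕ)
    · have : ¬ ((i : ℕ) = (q : ℕ)) := fun hc => hpq' (hip ▸ hc)
      simp [diagRect, this]
    · simp [diagRect, Matrix.conjTranspose_apply, hip]

lemma frobSq_ddk (m n k : ℕ) (d : ℕ → ℝ) :
    frobSq (diagRect m n d - truncDiagRect m n k d)
      = ∑ j : Fin n, (if k ≤ (j : ℕ) then (if (j : ℕ) < m then d (j : ℕ) ^ 2 else 0) else 0) := by
  rw [frobSq, Finset.sum_comm]
  refine Finset.sum_congr rfl fun j _ => ?_
  by_cases hj : (j : ℕ) < m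
  · rw [Finset.sum_eq_single (⟨(j : ℕ), hj⟩ : Fin m)]
    · by_cases hk : k ≤ (j : ℕ)
      · rw [if_pos hk, if_pos hj]
        have hkj : ¬ ((j : ℕ) < k) := by omega
        simp [diagRect, truncDiagRect, Matrix.sub_apply, hkj, Complex.norm_real,
          Real.norm_eq_abs, _root_.sq_abs]
      · rw [if_neg hk]
        have hkj : (j : ℕ) < k := by omega
        simp [diagRect, truncDiagRect, Matrix.sub_apply, hkj]
    · intro i _ hi
      have : ¬ ((i : ℕ) = (j : ℕ)) := fun hc => hi (by ext; exact hc)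
      simp [diagRect, truncDiagRect, Matrix.sub_apply, this]
    · intro hc
      exact absurd (Finset.mem_univ _) hc
  · have h0 : ∀ i : Fin m, ‖(diagRect m n d - truncDiagRect m n k d) i j‖ ^ 2 = 0 := by
      intro i
      have : ¬ ((i : ℕ) = (j : ℕ)) := fun hc => hj (hc ▸ i.2)
      simp [diagRect, truncDiagRect, Matrix.sub_apply, this]
    rw [Finset.sum_congr rfl fun i _ => h0 i]
    simp [hj]

lemma trace_orth (m n k : ℕ) (d : ℕ → ℝ) (M : Matrix (Fin m) (Fin m) ℂ) :
    ((diagRect m n d - truncDiagRect m n k d)ᴴ * (M * truncDiagRect m n k d)).trace = 0 := by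
  rw [Matrix.trace]
  refine Finset.sum_eq_zero fun p _ => ?_
  rw [Matrix.diag_apply, Matrix.mul_apply]
  refine Finset.sum_eq_zero fun i _ => ?_
  by_cases hp : (p : ℕ) < k
  · have h0 : (diagRect m n d - truncDiagRect m n k d) i p = 0 := by
      by_cases hip : (i : ℕ) = (p : ℕ)
      · have : (i : ℕ) < k := by omega
        simp [diagRect, truncDiagRect, Matrix.sub_apply, hip, this, hp]
      · simp [diagRect, truncDiagRect, Matrix.sub_apply, hip]
    rw [Matrix.conjTranspose_apply, h0, star_zero, zero_mul]
  · have h0 : (M * truncDiagRect m n k d) i p = 0 := by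
      rw [Matrix.mul_apply]
      refine Finset.sum_eq_zero fun l _ => ?_
      have : truncDiagRect m n k d l p = 0 := by
        simp only [truncDiagRect, Matrix.of_apply, ite_eq_right_iff, and_imp]
        intro h1 h2
        omega
      rw [this, mul_zero]
    rw [h0, mul_zero]

end Stmt11Aux

theorem stmt11 {m n k : ℕ} (A : Matrix (Fin m) (Fin n) ℂ)
    (Q : Matrix (Fin m) (Fin k) ℂ) (hQ : Qᴴ * Q = 1)
    (Ak : Matrix (Fin m) (Fin n) ℂ) (hAk : IsTruncSVD A k Ak) :
    frobNorm (A - Q * Qᴴ * Ak) ≤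
      Real.sqrt (frobNorm ((1 - Q * Qᴴ) * Ak) ^ 2 +
        ∑ j ∈ Finset.Icc (k + 1) n, sval A j ^ 2) := by
  classical
  obtain ⟨U, d, V, ⟨hU, hV, hd, hd0, hA⟩, hAkeq⟩ := hAk
  set D := diagRect m n d with hD
  set Dk := truncDiagRect m n k d with hDk
  set Dd := D - Dk with hDd
  set X : Matrix (Fin m) (Fin n) ℂ := U * Dd * Vᴴ with hX
  set Y : Matrix (Fin m) (Fin n) ℂ := (1 - Q * Qᴴ) * Ak with hY
  open Stmt11Aux in
  have hXA : X = A - Ak := by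
    rw [hX, hDd, Matrix.mul_sub, Matrix.sub_mul, ← hA, ← hAkeq]
  have hsplit : A - Q * Qᴴ * Ak = X + Y := by
    rw [hXA, hY, Matrix.sub_mul, Matrix.one_mul]
    abel
  have horth : (Xᴴ * Y).trace = 0 := by
    have h1 : Xᴴ * Y
        = V * ((Ddᴴ * ((Uᴴ * ((1 - Q * Qᴴ) * U)) * Dk)) * Vᴴ) := by
      rw [hX, hY, hAkeq]
      simp only [Matrix.conjTranspose_mul, Matrix.conjTranspose_conjTranspose, Matrix.mul_assoc]
    rw [h1, Matrix.trace_mul_comm, Matrix.mul_assoc, hV, Matrix.mul_one]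
    exact Stmt11Aux.trace_orth m n k d _
  set μ := (Matrix.isHermitian_conjTranspose_mul_self A).eigenvalues with hμ
  set f : Fin n → ℝ := fun p => if (p : ℕ) < m then d (p : ℕ) ^ 2 else 0 with hf
  have hf0 : ∀ p, 0 ≤ f p := by
    intro p
    rw [hf]
    dsimp only
    split_ifs
    · positivity
    · exact le_rfl
  have hfanti : Antitone f := by
    intro p q hpq
    rw [hf]
    dsimp only
    by_cases hq : (q : ℕ) < m
    · have hp : (p : ℕ) < m := lt_of_le_of_lt hpq hq
      rw [if_pos hp, if_pos hq]
      exact pow_le_pow_left₀ (hd0 _) (hd hpq) 2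
    · rw [if_neg hq]
      positivity
  have hAAH : Aᴴ * A = V * Matrix.diagonal (fun p => ((f p : ℝ) : ℂ)) * Vᴴ := by
    conv_lhs => rw [hA]
    simp only [Matrix.conjTranspose_mul, Matrix.conjTranspose_conjTranspose, Matrix.mul_assoc]
    rw [← Matrix.mul_assoc Uᴴ U, hU, Matrix.one_mul, ← Matrix.mul_assoc Dᴴ D, hD,
      Stmt11Aux.diagRect_conjT_mul, hf, ← Matrix.mul_assoc]
  have hmult := Stmt11Aux.eigen_multiset (Aᴴ * A) (Matrix.isHermitian_conjTranspose_mul_self A)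
    V f hV hAAH
  have hsort : ∀ j : Fin n, f j = μ (Tuple.sort μ j.rev) := by
    intro j
    rw [hμ]
    exact Stmt11Aux.antitone_eq_sorted _ f hfanti hmult j
  have hsval : ∀ t (ht : t < n), sval A (t + 1) ^ 2 = f ⟨t, ht⟩ := by
    intro t ht
    have h1 : t + 1 - 1 < n := by simpa using ht
    have h2 : sval A (t + 1) = svalFin A ⟨t, ht⟩ := by
      rw [sval, dif_pos h1]
      congr 1
    rw [h2, svalFin, ← hμ, ← hsort ⟨t, ht⟩]
    exact Real.sq_sqrt (hf0 _)
  have htail : ∑ j ∈ Finset.Icc (k + 1) n, sval A j ^ 2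
      = ∑ j : Fin n, (if k ≤ (j : ℕ) then f j else 0) := by
    have himg : Finset.Icc (k + 1) n = Finset.image (· + 1) (Finset.Ico k n) := by
      rw [Finset.image_add_right_Ico, Finset.Ico_add_one_right_eq_Icc]
    rw [himg, Finset.sum_image (fun a _ b _ h => by omega)]
    have e0 : ∀ j : Fin n, (if k ≤ (j : ℕ) then f j else 0)
        = (fun t => if k ≤ t then (if h : t < n then f ⟨t, h⟩ else 0) else 0) ((j : ℕ)) := by
      intro j
      simp [j.isLt, Fin.eta]
    rw [Finset.sum_congr rfl (fun j _ => e0 j),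
      Fin.sum_univ_eq_sum_range (fun t => if k ≤ t then (if h : t < n then f ⟨t, h⟩ else 0) else 0) n]
    have e1 : ∀ t ∈ Finset.range n,
        (if k ≤ t then (if h : t < n then f ⟨t, h⟩ else 0) else 0)
          = (if t ∈ Finset.Ico k n then (if h : t < n then f ⟨t, h⟩ else 0) else 0) := by
      intro t htr
      rw [Finset.mem_range] at htr
      simp [Finset.mem_Ico, htr]
    rw [Finset.sum_congr rfl e1, Finset.sum_ite_mem,
      Finset.inter_eq_right.mpr (fun t htm => Finset.mem_range.mpr (Finset.mem_Ico.mp htm).2)]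
    refine Finset.sum_congr rfl fun t htm => ?_
    have ht : t < n := (Finset.mem_Ico.mp htm).2
    rw [dif_pos ht]
    exact hsval t ht
  have hfX : Stmt11Aux.frobSq X = ∑ j : Fin n, (if k ≤ (j : ℕ) then f j else 0) := by
    rw [hX, Stmt11Aux.frobSq_unitary_conj U V Dd hU hV, hDd, hD, hDk, Stmt11Aux.frobSq_ddk]
  have hYsq : frobNorm ((1 - Q * Qᴴ) * Ak) ^ 2 = Stmt11Aux.frobSq Y := by
    rw [hY]
    exact Real.sq_sqrt (Stmt11Aux.frobSq_nonneg _)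
  calc frobNorm (A - Q * Qᴴ * Ak) = Real.sqrt (Stmt11Aux.frobSq (X + Y)) := by rw [hsplit]; rfl
    _ = Real.sqrt (Stmt11Aux.frobSq X + Stmt11Aux.frobSq Y) := by
        rw [Stmt11Aux.frobSq_add_of_orth X Y horth]
    _ = Real.sqrt (frobNorm ((1 - Q * Qᴴ) * Ak) ^ 2 +
          ∑ j ∈ Finset.Icc (k + 1) n, sval A j ^ 2) := by
        rw [hYsq, htail, hfX, add_comm]
    _ ≤ _ := le_rfl


end
end

section
/- Let Q, P ∈ ℝ^{N×n_s}, set X_c = Q + i·P ∈ ℂ^{N×n_s} and Y_s = [[Q, −P]; [P, Q]] ∈ ℝ^{2N×2n_s}. Then for every q_pow ∈ ℕ₀, setting M = X_c·(X_c^H·X_c)^{q_pow}, it holds that Y_s·(Y_sᵀ·Y_s)^{q_pow} = [ [Re(M); Im(M)] , J_{2N}ᵀ·[Re(M); Im(M)] ], where J_{2N} = [[0_N, I_N]; [−I_N, 0_N]]. -/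
open Matrix MeasureTheory
open scoped BigOperators

noncomputable section

/-- real representation of a complex matrix -/
def phiR {m n : ℕ} (A : Matrix (Fin m) (Fin n) ℂ) :
    Matrix (Fin m ⊕ Fin m) (Fin n ⊕ Fin n) ℝ :=
  Matrix.fromBlocks (A.map Complex.re) (-(A.map Complex.im))
    (A.map Complex.im) (A.map Complex.re)

lemma phiR_mul {m n k : ℕ} (A : Matrix (Fin m) (Fin n) ℂ) (B : Matrix (Fin n) (Fin k) ℂ) :
    phiR (A * B) = phiR A * phiR B := by
  unfold phiR
  rw [Matrix.fromBlocks_multiply]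
  ext i j
  cases i <;> cases j <;>
    simp [Matrix.fromBlocks, Matrix.mul_apply, Complex.mul_re, Complex.mul_im,
      sub_eq_add_neg, Finset.sum_add_distrib, add_comm]

lemma phiR_one {n : ℕ} : phiR (1 : Matrix (Fin n) (Fin n) ℂ) = 1 := by
  unfold phiR
  have h1 : (1 : Matrix (Fin n) (Fin n) ℂ).map Complex.re = 1 := by
    ext i j; by_cases h : i = j <;> simp [Matrix.one_apply, h]
  have h2 : (1 : Matrix (Fin n) (Fin n) ℂ).map Complex.im = 0 := by
    ext i j; by_cases h : i = j <;> simp [Matrix.one_apply, h]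
  rw [h1, h2]
  simp [Matrix.fromBlocks_one]

lemma phiR_pow {n : ℕ} (A : Matrix (Fin n) (Fin n) ℂ) (q : ℕ) :
    phiR (A ^ q) = phiR A ^ q := by
  induction q with
  | zero => simp [phiR_one]
  | succ k ih => rw [pow_succ, pow_succ, phiR_mul, ih]

lemma phiR_conjTranspose {m n : ℕ} (A : Matrix (Fin m) (Fin n) ℂ) :
    phiR Aᴴ = (phiR A)ᵀ := by
  unfold phiR
  rw [Matrix.fromBlocks_transpose]
  ext i j
  cases i <;> cases j <;>
    simp [Matrix.fromBlocks, Matrix.conjTranspose_apply, Matrix.transpose_apply]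

theorem stmt17 {N ns : ℕ} (Qm Pm : Matrix (Fin N) (Fin ns) ℝ)
    (Xc : Matrix (Fin N) (Fin ns) ℂ) (hXc : Xc = cplx Qm Pm)
    (Ys : Matrix (Fin N ⊕ Fin N) (Fin ns ⊕ Fin ns) ℝ)
    (hYs : Ys = Matrix.fromBlocks Qm (-Pm) Pm Qm)
    (qpow : ℕ) (M : Matrix (Fin N) (Fin ns) ℂ) (hM : M = Xc * (Xcᴴ * Xc) ^ qpow) :
    Ys * (Ysᵀ * Ys) ^ qpow =
      Matrix.fromCols (Matrix.fromRows (M.map Complex.re) (M.map Complex.im))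
        ((poisson N)ᵀ * Matrix.fromRows (M.map Complex.re) (M.map Complex.im)) := by
  have hY : Ys = phiR Xc := by
    rw [hYs, hXc]
    ext i j
    cases i <;> cases j <;>
      simp [phiR, cplx, Matrix.fromBlocks]
  have key : Ys * (Ysᵀ * Ys) ^ qpow = phiR M := by
    rw [hM, phiR_mul, phiR_pow, phiR_mul, phiR_conjTranspose, ← hY]
  rw [key]
  have hJ : (poisson N)ᵀ * Matrix.fromRows (M.map Complex.re) (M.map Complex.im) =
      Matrix.fromRows (-(M.map Complex.im)) (M.map Complex.re) := by
    unfold poisson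
    rw [Matrix.fromBlocks_transpose]
    ext i j
    cases i <;>
      simp [Matrix.mul_apply, Matrix.fromBlocks,
        Fintype.sum_sum_type, Matrix.one_apply, Matrix.fromRows_apply_inl,
        Matrix.fromRows_apply_inr]
  rw [hJ]
  unfold phiR
  ext i j
  cases i <;> cases j <;>
    simp [Matrix.fromBlocks]


end
end

section
/- Let Q, P ∈ ℝ^{N×n_s}, X_c = Q + i·P ∈ ℂ^{N×n_s}, Y_s = [[Q, −P]; [P, Q]] ∈ ℝ^{2N×2n_s}, q_pow ∈ ℕ₀, and let Ω ∈ ℂ^{n_s×l} be any matrix. Set Y = X_c·(X_c^H·X_c)^{q_pow}·Ω, define Z = [ [Re(Y); Im(Y)], J_{2N}ᵀ·[Re(Y); Im(Y)] ] ∈ ℝ^{2N×2l}, and define the block-structured matrix Ω̃ = [ [Re(Ω); Im(Ω)], J_{2n_s}ᵀ·[Re(Ω); Im(Ω)] ] ∈ ℝ^{2n_s×2l}. Then Z = Y_s·(Y_sᵀ·Y_s)^{q_pow}·Ω̃. -/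
open Matrix MeasureTheory
open scoped BigOperators

noncomputable section

/-- realification of a complex matrix. -/
def realify {m n : ℕ} (M : Matrix (Fin m) (Fin n) ℂ) :
    Matrix (Fin m ⊕ Fin m) (Fin n ⊕ Fin n) ℝ :=
  Matrix.fromBlocks (M.map Complex.re) (-(M.map Complex.im))
    (M.map Complex.im) (M.map Complex.re)

lemma realify_mul {m n k : ℕ} (A : Matrix (Fin m) (Fin n) ℂ)
    (B : Matrix (Fin n) (Fin k) ℂ) : realify (A * B) = realify A * realify B := by
  ext i j
  cases i <;> cases j <;>
    simp [realify, Matrix.mul_apply, Complex.mul_re, Complex.mul_im,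
      Finset.sum_sub_distrib, Finset.sum_add_distrib] <;> ring_nf

lemma realify_one {n : ℕ} : realify (1 : Matrix (Fin n) (Fin n) ℂ) = 1 := by
  ext i j
  cases i <;> cases j <;>
    simp [realify, Matrix.one_apply] <;> aesop

lemma realify_pow {n : ℕ} (A : Matrix (Fin n) (Fin n) ℂ) (q : ℕ) :
    realify (A ^ q) = realify A ^ q := by
  induction q with
  | zero => simpa using realify_one
  | succ q ih => rw [pow_succ, pow_succ, realify_mul, ih]

lemma realify_conjT {m n : ℕ} (A : Matrix (Fin m) (Fin n) ℂ) :
    realify (Aᴴ) = (realify A)ᵀ := by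
  ext i j
  cases i <;> cases j <;> simp [realify, Matrix.conjTranspose_apply]

theorem stmt18 {N ns l : ℕ} (Qm Pm : Matrix (Fin N) (Fin ns) ℝ)
    (Xc : Matrix (Fin N) (Fin ns) ℂ) (hXc : Xc = cplx Qm Pm)
    (Ys : Matrix (Fin N ⊕ Fin N) (Fin ns ⊕ Fin ns) ℝ)
    (hYs : Ys = Matrix.fromBlocks Qm (-Pm) Pm Qm)
    (qpow : ℕ) (Ω : Matrix (Fin ns) (Fin l) ℂ)
    (Y : Matrix (Fin N) (Fin l) ℂ) (hY : Y = Xc * (Xcᴴ * Xc) ^ qpow * Ω)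
    (Z : Matrix (Fin N ⊕ Fin N) (Fin l ⊕ Fin l) ℝ)
    (hZ : Z = Matrix.fromCols (Matrix.fromRows (Y.map Complex.re) (Y.map Complex.im))
      ((poisson N)ᵀ * Matrix.fromRows (Y.map Complex.re) (Y.map Complex.im)))
    (Ωt : Matrix (Fin ns ⊕ Fin ns) (Fin l ⊕ Fin l) ℝ)
    (hΩt : Ωt = Matrix.fromCols
      (Matrix.fromRows (Ω.map Complex.re) (Ω.map Complex.im))
      ((poisson ns)ᵀ * Matrix.fromRows (Ω.map Complex.re) (Ω.map Complex.im))) :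
    Z = Ys * (Ysᵀ * Ys) ^ qpow * Ωt := by
  have hYsr : Ys = realify Xc := by
    subst hXc hYs
    ext i j
    cases i <;> cases j <;> simp [realify, cplx, Complex.ext_iff]
  have hZr : Z = realify Y := by
    subst hZ
    ext i j
    cases i <;> cases j <;>
      simp [realify, poisson, Matrix.fromCols, Matrix.fromRows_apply_inl, Matrix.fromRows_apply_inr,
        Matrix.fromBlocks, Matrix.mul_apply, Fintype.sum_sum_type,
        Matrix.one_apply, Finset.sum_ite_eq, Finset.sum_ite_eq']
  have hΩr : Ωt = realify Ω := by
    subst hΩt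
    ext i j
    cases i <;> cases j <;>
      simp [realify, poisson, Matrix.fromCols, Matrix.fromRows_apply_inl, Matrix.fromRows_apply_inr,
        Matrix.fromBlocks, Matrix.mul_apply, Fintype.sum_sum_type,
        Matrix.one_apply, Finset.sum_ite_eq, Finset.sum_ite_eq']
  rw [hZr, hΩr, hYsr, hY, realify_mul, realify_mul, realify_pow, realify_mul,
    realify_conjT]

end
end
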